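/- arXiv:1912.03680 — 11 statements merged into one kernel-verified Lean document; each statement's English description precedes it below -/
import Mathlib

section
/- Let $P_n(x)$ be the sequence of real polynomials defined by $P_0(x)=1$, $P_1(x)=x^2+4x+1$, and $P_n(x)=(x^2+4x+1)P_{n-1}(x)-x^2P_{n-2}(x)$ for $n\ge 2$. Then for every $n\ge 0$, the polynomial $x^2+4x+1$ divides $P_{2n+1}(x)$ in the polynomial ring $\mathbb{R}[x]$. -/
open Polynomial

/-- The sextet polynomials of the pyrene chains. -/
noncomputable def pyreneP : ℕ → Polynomial ℝ
  | 0 => 1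
  | 1 => X ^ 2 + 4 * X + 1
  | (n + 2) => (X ^ 2 + 4 * X + 1) * pyreneP (n + 1) - X ^ 2 * pyreneP n

theorem dvd_pyreneP_odd (n : ℕ) :
    (X ^ 2 + 4 * X + 1 : Polynomial ℝ) ∣ pyreneP (2 * n + 1) := by
  induction n with
  | zero => simp [pyreneP]
  | succ k ih =>
    have h : 2 * (k + 1) + 1 = (2 * k + 1) + 2 := by ring
    rw [h, pyreneP]
    exact dvd_sub (Dvd.intro _ rfl) (Dvd.dvd.mul_left ih _)
end

section
/- Let $P_n(x)$ be the sequence of real polynomials defined by $P_0(x)=1$, $P_1(x)=x^2+4x+1$, and $P_n(x)=(x^2+4x+1)P_{n-1}(x)-x^2P_{n-2}(x)$ for $n\ge 2$. Then for every $n\ge 0$ and every $k$ with $0\le k\le 2n$, the coefficient of $x^k$ in $P_n(x)$ equals $\sum_{i=0}^{k}\binom{2n+1-i}{i}\binom{2n-2i}{k-i}$. -/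
open Polynomial

/-- Closed form candidate: `(1+x)^{2n} F_{2n+2}(x/(1+x)^2)` with `F` Fibonacci polynomials. -/
noncomputable def pyQ (n : ℕ) : Polynomial ℝ :=
  ∑ i ∈ Finset.range (n + 1),
    C (((2 * n + 1 - i).choose i : ℝ)) * X ^ i * (1 + X) ^ (2 * n - 2 * i)

/-- Companion family: `(1+x)^{2n} F_{2n+1}(x/(1+x)^2)`. -/
noncomputable def pyR (n : ℕ) : Polynomial ℝ :=
  ∑ i ∈ Finset.range (n + 1),
    C (((2 * n - i).choose i : ℝ)) * X ^ i * (1 + X) ^ (2 * n - 2 * i)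

lemma pyA (n : ℕ) : pyQ (n + 1) = pyR (n + 1) + X * pyQ n := by
  unfold pyQ pyR
  conv_lhs => rw [Finset.sum_range_succ']
  conv_rhs => rw [Finset.sum_range_succ']
  rw [Finset.mul_sum]
  have key : ∀ i ∈ Finset.range (n + 1),
      C (((2 * (n + 1) + 1 - (i + 1)).choose (i + 1) : ℝ)) * X ^ (i + 1) *
        (1 + X) ^ (2 * (n + 1) - 2 * (i + 1)) =
      C (((2 * (n + 1) - (i + 1)).choose (i + 1) : ℝ)) * X ^ (i + 1) *
        (1 + X) ^ (2 * (n + 1) - 2 * (i + 1))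
        + X * (C (((2 * n + 1 - i).choose i : ℝ)) * X ^ i * (1 + X) ^ (2 * n - 2 * i)) := by
    intro i hi
    have hi' : i < n + 1 := Finset.mem_range.mp hi
    have e1 : 2 * (n + 1) + 1 - (i + 1) = (2 * n + 1 - i) + 1 := by omega
    have e2 : 2 * (n + 1) - (i + 1) = 2 * n + 1 - i := by omega
    have e3 : 2 * (n + 1) - 2 * (i + 1) = 2 * n - 2 * i := by omega
    rw [e1, e2, e3, Nat.choose_succ_succ']
    push_cast
    rw [map_add]
    ring
  rw [Finset.sum_congr rfl key, Finset.sum_add_distrib]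
  have h0 : C (((2 * (n + 1) + 1 - 0).choose 0 : ℝ)) * X ^ 0 * (1 + X) ^ (2 * (n + 1) - 2 * 0)
      = C (((2 * (n + 1) - 0).choose 0 : ℝ)) * X ^ 0 * (1 + X) ^ (2 * (n + 1) - 2 * 0) := by
    simp
  rw [h0]
  ring

lemma pyB (n : ℕ) : pyR (n + 1) = (1 + X) ^ 2 * pyQ n + X * pyR n := by
  unfold pyQ pyR
  conv_lhs => rw [Finset.sum_range_succ']
  conv_rhs => rw [Finset.sum_range_succ']
  rw [mul_add ((1 + X : Polynomial ℝ) ^ 2), Finset.mul_sum, Finset.mul_sum]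
  have key : ∀ i ∈ Finset.range (n + 1),
      C (((2 * (n + 1) - (i + 1)).choose (i + 1) : ℝ)) * X ^ (i + 1) *
        (1 + X) ^ (2 * (n + 1) - 2 * (i + 1)) =
      C (((2 * n - i).choose (i + 1) : ℝ)) * X ^ (i + 1) * (1 + X) ^ (2 * n - 2 * i)
        + X * (C (((2 * n - i).choose i : ℝ)) * X ^ i * (1 + X) ^ (2 * n - 2 * i)) := by
    intro i hi
    have hi' : i < n + 1 := Finset.mem_range.mp hi
    have e1 : 2 * (n + 1) - (i + 1) = (2 * n - i) + 1 := by omega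
    have e3 : 2 * (n + 1) - 2 * (i + 1) = 2 * n - 2 * i := by omega
    rw [e1, e3, Nat.choose_succ_succ]
    push_cast
    rw [map_add]
    ring
  rw [Finset.sum_congr rfl key, Finset.sum_add_distrib]
  have hsplit : ∑ i ∈ Finset.range (n + 1),
      C (((2 * n - i).choose (i + 1) : ℝ)) * X ^ (i + 1) * (1 + X) ^ (2 * n - 2 * i) =
      ∑ i ∈ Finset.range n,
      C (((2 * n - i).choose (i + 1) : ℝ)) * X ^ (i + 1) * (1 + X) ^ (2 * n - 2 * i) := by
    rw [Finset.sum_range_succ]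
    have h2 : 2 * n - n = n := by omega
    rw [h2, Nat.choose_succ_self]
    simp
  rw [hsplit]
  have term_eq : ∀ i ∈ Finset.range n,
      C (((2 * n - i).choose (i + 1) : ℝ)) * X ^ (i + 1) * (1 + X) ^ (2 * n - 2 * i) =
      (1 + X) ^ 2 * (C (((2 * n + 1 - (i + 1)).choose (i + 1) : ℝ)) * X ^ (i + 1) *
        (1 + X) ^ (2 * n - 2 * (i + 1))) := by
    intro i hi
    have hi' : i < n := Finset.mem_range.mp hi
    have e1 : 2 * n + 1 - (i + 1) = 2 * n - i := by omega
    have e2 : 2 * n - 2 * i = (2 * n - 2 * (i + 1)) + 2 := by omega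
    rw [e1, e2, pow_add]
    ring
  rw [Finset.sum_congr rfl term_eq]
  have h0 : C (((2 * (n + 1) - 0).choose 0 : ℝ)) * X ^ 0 * (1 + X) ^ (2 * (n + 1) - 2 * 0)
      = (1 + X) ^ 2 * (C (((2 * n + 1 - 0).choose 0 : ℝ)) * X ^ 0 * (1 + X) ^ (2 * n - 2 * 0)) := by
    have e : 2 * (n + 1) - 2 * 0 = (2 * n - 2 * 0) + 2 := by omega
    rw [e, pow_add]
    simp
    ring
  rw [h0]
  ring

lemma pyQ_rec (n : ℕ) :
    pyQ (n + 2) = (X ^ 2 + 4 * X + 1) * pyQ (n + 1) - X ^ 2 * pyQ n := by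
  have h1 := pyA (n + 1)
  have h2 := pyB (n + 1)
  have h3 := pyA n
  linear_combination h1 + h2 - X * h3

lemma pyreneP_eq_pyQ (n : ℕ) : pyreneP n = pyQ n := by
  have h0 : pyreneP 0 = pyQ 0 := by
    unfold pyreneP pyQ
    simp
  have h1 : pyreneP 1 = pyQ 1 := by
    unfold pyreneP pyQ
    rw [Finset.sum_range_succ, Finset.sum_range_succ]
    norm_num
    have : (C (2:ℝ)) = (2 : Polynomial ℝ) := by
      simp [map_ofNat]
    rw [this]
    ring
  have key : ∀ m, pyreneP m = pyQ m ∧ pyreneP (m + 1) = pyQ (m + 1) := by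
    intro m
    induction m with
    | zero => exact ⟨h0, h1⟩
    | succ m ih =>
      refine ⟨ih.2, ?_⟩
      show pyreneP (m + 2) = _
      rw [pyreneP, ih.1, ih.2, pyQ_rec]
  exact (key n).1

theorem pyreneP_coeff (n k : ℕ) (hk : k ≤ 2 * n) :
    (pyreneP n).coeff k = ∑ i ∈ Finset.range (k + 1),
      (((2 * n + 1 - i).choose i : ℝ) * ((2 * n - 2 * i).choose (k - i) : ℝ)) := by
  rw [pyreneP_eq_pyQ]
  unfold pyQ
  rw [finset_sum_coeff]
  have coeff_term : ∀ i, (C (((2 * n + 1 - i).choose i : ℝ)) * X ^ i *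
      (1 + X) ^ (2 * n - 2 * i)).coeff k =
      ((2 * n + 1 - i).choose i : ℝ) *
        (if i ≤ k then ((2 * n - 2 * i).choose (k - i) : ℝ) else 0) := by
    intro i
    have h : C (((2 * n + 1 - i).choose i : ℝ)) * X ^ i * (1 + X) ^ (2 * n - 2 * i) =
        C (((2 * n + 1 - i).choose i : ℝ)) * ((1 + X) ^ (2 * n - 2 * i) * X ^ i) := by ring
    rw [h, coeff_C_mul, coeff_mul_X_pow', coeff_one_add_X_pow]
  simp only [coeff_term]
  set m := min n k with hm
  have hL : ∑ i ∈ Finset.range (n + 1), ((2 * n + 1 - i).choose i : ℝ) *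
      (if i ≤ k then ((2 * n - 2 * i).choose (k - i) : ℝ) else 0) =
      ∑ i ∈ Finset.range (m + 1), ((2 * n + 1 - i).choose i : ℝ) *
      (if i ≤ k then ((2 * n - 2 * i).choose (k - i) : ℝ) else 0) := by
    symm
    apply Finset.sum_subset
    · apply Finset.range_subset_range.mpr; omega
    · intro i hi hni
      have h1 : i < n + 1 := Finset.mem_range.mp hi
      have h2 : ¬ i < m + 1 := fun h => hni (Finset.mem_range.mpr h)
      have hik : ¬ i ≤ k := by omega
      rw [if_neg hik, mul_zero]
  have hR : ∑ i ∈ Finset.range (k + 1),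
      (((2 * n + 1 - i).choose i : ℝ) * ((2 * n - 2 * i).choose (k - i) : ℝ)) =
      ∑ i ∈ Finset.range (m + 1),
      (((2 * n + 1 - i).choose i : ℝ) * ((2 * n - 2 * i).choose (k - i) : ℝ)) := by
    symm
    apply Finset.sum_subset
    · apply Finset.range_subset_range.mpr; omega
    · intro i hi hni
      have h1 : i < k + 1 := Finset.mem_range.mp hi
      have h2 : ¬ i < m + 1 := fun h => hni (Finset.mem_range.mpr h)
      have hz : (2 * n + 1 - i).choose i = 0 := by
        apply Nat.choose_eq_zero_of_lt
        omega
      rw [hz]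
      simp
  rw [hL, hR]
  apply Finset.sum_congr rfl
  intro i hi
  have h1 : i < m + 1 := Finset.mem_range.mp hi
  rw [if_pos (by omega)]
end

section
/- Let $P_n(x)$ be the sequence of real polynomials defined by $P_0(x)=1$, $P_1(x)=x^2+4x+1$, and $P_n(x)=(x^2+4x+1)P_{n-1}(x)-x^2P_{n-2}(x)$ for $n\ge 2$. Then for every $n\ge 0$, $P_n(1)=\dfrac{1}{4\sqrt{2}}\left[(\sqrt{2}+1)^{2n+2}-(\sqrt{2}-1)^{2n+2}\right]$, and moreover $P_n(1)=\left\lfloor\dfrac{(\sqrt{2}+1)^{2n+2}}{4\sqrt{2}}\right\rfloor$. -/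
open Polynomial

/-- Integer Kekulé sequence. -/
def pyreneA : ℕ → ℤ
  | 0 => 1
  | 1 => 6
  | (n + 2) => 6 * pyreneA (n + 1) - pyreneA n

lemma pyreneP_eval_one (n : ℕ) : (pyreneP n).eval 1 = (pyreneA n : ℝ) := by
  induction n using Nat.twoStepInduction with
  | zero => simp [pyreneP, pyreneA]
  | one => simp [pyreneP, pyreneA]; norm_num
  | more n ih1 ih2 =>
    simp only [pyreneP, pyreneA, eval_sub, eval_mul, eval_add, eval_pow, eval_X, eval_one,
      eval_ofNat, ih1, ih2]
    push_cast
    ring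

lemma pyreneA_closed (n : ℕ) :
    (pyreneA n : ℝ) = (1 / (4 * Real.sqrt 2)) *
      ((Real.sqrt 2 + 1) ^ (2 * n + 2) - (Real.sqrt 2 - 1) ^ (2 * n + 2)) := by
  set s := Real.sqrt 2 with hsdef
  have hs2 : s ^ 2 = 2 := Real.sq_sqrt (by norm_num)
  have hs0 : 0 ≤ s := Real.sqrt_nonneg 2
  have hs1 : 1 < s := by nlinarith
  have hne : s ≠ 0 := by positivity
  have p2 : (s + 1) ^ 2 = 3 + 2 * s := by linear_combination hs2
  have m2 : (s - 1) ^ 2 = 3 - 2 * s := by linear_combination hs2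
  have p4 : (s + 1) ^ 4 = 17 + 12 * s := by linear_combination (s ^ 2 + 4 * s + 8) * hs2
  have m4 : (s - 1) ^ 4 = 17 - 12 * s := by linear_combination (s ^ 2 - 4 * s + 8) * hs2
  induction n using Nat.twoStepInduction with
  | zero =>
    simp only [pyreneA, Nat.mul_zero, Nat.zero_add, Int.cast_one, p2, m2]
    field_simp
    ring
  | one =>
    have h1 : 2 * 1 + 2 = 4 := rfl
    rw [h1, p4, m4]
    simp only [pyreneA]
    push_cast
    field_simp
    ring
  | more n ih1 ih2 =>
    have e1 : 2 * (n + 1) + 2 = (2 * n + 2) + 2 := by ring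
    have e2 : 2 * (n + 2) + 2 = (2 * n + 2) + 4 := by ring
    rw [e1] at ih2
    rw [e2]
    simp only [pyreneA, pow_add, p2, m2, p4, m4] at *
    push_cast
    rw [ih1, ih2]
    field_simp
    ring

theorem pyreneP_kekule (n : ℕ) :
    (pyreneP n).eval 1 =
      (1 / (4 * Real.sqrt 2)) *
        ((Real.sqrt 2 + 1) ^ (2 * n + 2) - (Real.sqrt 2 - 1) ^ (2 * n + 2)) ∧
    (pyreneP n).eval 1 =
      (⌊(Real.sqrt 2 + 1) ^ (2 * n + 2) / (4 * Real.sqrt 2)⌋ : ℤ) := by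
  have hmain := (pyreneP_eval_one n).trans (pyreneA_closed n)
  refine ⟨hmain, ?_⟩
  rw [pyreneP_eval_one]
  set s := Real.sqrt 2 with hsdef
  have hs2 : s ^ 2 = 2 := Real.sq_sqrt (by norm_num)
  have hs0 : 0 ≤ s := Real.sqrt_nonneg 2
  have hs1 : 1 < s := by nlinarith
  have hs32 : s < 3 / 2 := by nlinarith
  have hB0 : 0 ≤ (s - 1) ^ (2 * n + 2) := pow_nonneg (by linarith) _
  have hB1 : (s - 1) ^ (2 * n + 2) < 1 := by
    apply pow_lt_one₀ (by linarith) (by linarith)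
    omega
  have h4s : (1 : ℝ) < 4 * s := by linarith
  have hA : (s + 1) ^ (2 * n + 2) / (4 * s) =
      (pyreneA n : ℝ) + (s - 1) ^ (2 * n + 2) / (4 * s) := by
    rw [pyreneA_closed n]
    field_simp
    simp only [hsdef]
    ring
  norm_cast
  symm
  rw [Int.floor_eq_iff]
  constructor
  · rw [hA]
    have : 0 ≤ (s - 1) ^ (2 * n + 2) / (4 * s) := by positivity
    linarith
  · rw [hA]
    have : (s - 1) ^ (2 * n + 2) / (4 * s) < 1 := by
      rw [div_lt_one (by linarith)]
      linarith
    linarith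
end

section
/- Let $P_n(x)$ be the sequence of real polynomials defined by $P_0(x)=1$, $P_1(x)=x^2+4x+1$, and $P_n(x)=(x^2+4x+1)P_{n-1}(x)-x^2P_{n-2}(x)$ for $n\ge 2$. Then for every $n\ge 1$, the polynomial $P_n(x)$ has $2n$ real zeros which are pairwise distinct and all lie in the open interval $\left(-3-2\sqrt{2},\,-3+2\sqrt{2}\right)$; in particular, every complex zero of $P_n$ is real. -/
open Polynomial

lemma pyrene_quad_monic : (X ^ 2 + 4 * X + 1 : Polynomial ℝ).Monic := by
  monicity!

lemma pyrene_quad_deg : (X ^ 2 + 4 * X + 1 : Polynomial ℝ).natDegree = 2 := by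
  compute_degree!

lemma pyreneP_monic_deg (n : ℕ) : (pyreneP n).Monic ∧ (pyreneP n).natDegree = 2 * n := by
  induction n using Nat.twoStepInduction with
  | zero => exact ⟨monic_one, by simp [pyreneP]⟩
  | one => exact ⟨pyrene_quad_monic, by simpa [pyreneP] using pyrene_quad_deg⟩
  | more m ih1 ih2 =>
    obtain ⟨hm1, hd1⟩ := ih1
    obtain ⟨hm2, hd2⟩ := ih2
    have hmainM : ((X ^ 2 + 4 * X + 1) * pyreneP (m + 1)).Monic := pyrene_quad_monic.mul hm2
    have hmaind : ((X ^ 2 + 4 * X + 1) * pyreneP (m + 1)).natDegree = 2 * m + 4 := by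
      rw [pyrene_quad_monic.natDegree_mul hm2, pyrene_quad_deg, hd2]; ring
    have hlt : (X ^ 2 * pyreneP m : Polynomial ℝ).degree <
        ((X ^ 2 + 4 * X + 1) * pyreneP (m + 1)).degree := by
      have h1 : (X ^ 2 * pyreneP m : Polynomial ℝ).natDegree = 2 * m + 2 := by
        rw [(monic_X_pow 2).natDegree_mul hm1, natDegree_X_pow, hd1]; ring
      calc (X ^ 2 * pyreneP m : Polynomial ℝ).degree ≤ (2 * m + 2 : ℕ) := by
            rw [← h1]; exact degree_le_natDegree
        _ < ((2 * m + 4 : ℕ) : WithBot ℕ) := by exact_mod_cast by omega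
        _ = _ := by rw [← hmaind, degree_eq_natDegree hmainM.ne_zero]
    have hM : (pyreneP (m + 2)).Monic := by
      rw [show pyreneP (m + 2) = (X ^ 2 + 4 * X + 1) * pyreneP (m + 1) - X ^ 2 * pyreneP m from rfl]
      exact hmainM.sub_of_left hlt
    refine ⟨hM, ?_⟩
    rw [show pyreneP (m + 2) = (X ^ 2 + 4 * X + 1) * pyreneP (m + 1) - X ^ 2 * pyreneP m from rfl]
    have := degree_sub_eq_left_of_degree_lt hlt
    have h2 : (((X ^ 2 + 4 * X + 1) * pyreneP (m + 1) - X ^ 2 * pyreneP m : Polynomial ℝ)).natDegree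
        = ((X ^ 2 + 4 * X + 1) * pyreneP (m + 1)).natDegree :=
      natDegree_eq_of_degree_eq this
    rw [h2, hmaind]; ring

lemma pyreneP_eval_formula (x θ : ℝ) (h : x ^ 2 + 4 * x + 1 = 2 * x * Real.cos θ) (m : ℕ) :
    Real.sin θ * (pyreneP m).eval x = x ^ m * Real.sin ((m + 1) * θ) := by
  induction m using Nat.twoStepInduction with
  | zero => simp [pyreneP]
  | one =>
    have h2 : Real.sin (2 * θ) = 2 * Real.sin θ * Real.cos θ := Real.sin_two_mul θ
    simp only [pyreneP, eval_add, eval_mul, eval_pow, eval_X, eval_one, eval_ofNat]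
    push_cast
    rw [h]
    norm_num
    linear_combination -x * h2
  | more m ih1 ih2 =>
    have key : Real.sin (((m : ℝ) + 3) * θ) + Real.sin (((m : ℝ) + 1) * θ)
        = 2 * Real.cos θ * Real.sin (((m : ℝ) + 2) * θ) := by
      have h1 := Real.sin_add (((m : ℝ) + 2) * θ) θ
      have h2 := Real.sin_sub (((m : ℝ) + 2) * θ) θ
      have e1 : ((m : ℝ) + 3) * θ = ((m : ℝ) + 2) * θ + θ := by ring
      have e2 : ((m : ℝ) + 1) * θ = ((m : ℝ) + 2) * θ - θ := by ring
      rw [e1, e2, h1, h2]; ring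
    have he : (pyreneP (m + 2)).eval x
        = (x ^ 2 + 4 * x + 1) * (pyreneP (m + 1)).eval x - x ^ 2 * (pyreneP m).eval x := by
      simp [pyreneP]
    rw [he, h]
    push_cast at ih1 ih2 ⊢
    have e1 : ((m : ℝ) + 1 + 1) = (m : ℝ) + 2 := by ring
    have e2 : ((m : ℝ) + 2 + 1) = (m : ℝ) + 3 := by ring
    rw [e1] at ih2
    rw [e2]
    linear_combination (2 * x * Real.cos θ) * ih2 - x ^ 2 * ih1 - x ^ (m + 2) * key

/-- The angle associated to the `k`-th zero. -/
noncomputable def pyreneTheta (n k : ℕ) : ℝ :=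
  ((k % n + 1 : ℕ) : ℝ) * Real.pi / ((n : ℝ) + 1)

noncomputable def pyreneS (n k : ℕ) : ℝ := 2 - Real.cos (pyreneTheta n k)

noncomputable def pyreneD (n k : ℕ) : ℝ := Real.sqrt (pyreneS n k ^ 2 - 1)

noncomputable def pyreneR (n k : ℕ) : ℝ :=
  if k < n then -pyreneS n k - pyreneD n k else -pyreneS n k + pyreneD n k

lemma pyreneTheta_mem {n : ℕ} (hn : 1 ≤ n) (k : ℕ) :
    pyreneTheta n k ∈ Set.Ioo 0 Real.pi := by
  have hπ := Real.pi_pos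
  have hmod : k % n < n := Nat.mod_lt _ (by omega)
  constructor
  · unfold pyreneTheta
    positivity
  · unfold pyreneTheta
    rw [div_lt_iff₀ (by positivity)]
    have hc : ((k % n + 1 : ℕ) : ℝ) < (n : ℝ) + 1 := by exact_mod_cast by omega
    nlinarith

lemma pyreneCos_mem {n : ℕ} (hn : 1 ≤ n) (k : ℕ) :
    Real.cos (pyreneTheta n k) ∈ Set.Ioo (-1 : ℝ) 1 := by
  obtain ⟨h0, h1⟩ := pyreneTheta_mem hn k
  constructor
  · have := Real.strictAntiOn_cos (Set.mem_Icc.mpr ⟨h0.le, h1.le⟩)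
      (Set.mem_Icc.mpr ⟨Real.pi_pos.le, le_refl _⟩) h1
    simpa [Real.cos_pi] using this
  · have := Real.strictAntiOn_cos (Set.mem_Icc.mpr ⟨le_refl (0:ℝ), Real.pi_pos.le⟩)
      (Set.mem_Icc.mpr ⟨h0.le, h1.le⟩) h0
    simpa [Real.cos_zero] using this

lemma pyreneS_mem {n : ℕ} (hn : 1 ≤ n) (k : ℕ) : pyreneS n k ∈ Set.Ioo (1 : ℝ) 3 := by
  obtain ⟨h1, h2⟩ := pyreneCos_mem hn k
  exact ⟨by simp only [pyreneS]; linarith, by simp only [pyreneS]; linarith⟩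

lemma pyreneD_sq {n : ℕ} (hn : 1 ≤ n) (k : ℕ) : pyreneD n k ^ 2 = pyreneS n k ^ 2 - 1 := by
  obtain ⟨h1, _⟩ := pyreneS_mem hn k
  exact Real.sq_sqrt (by nlinarith)

lemma pyreneD_pos {n : ℕ} (hn : 1 ≤ n) (k : ℕ) : 0 < pyreneD n k := by
  obtain ⟨h1, _⟩ := pyreneS_mem hn k
  exact Real.sqrt_pos.mpr (by nlinarith)

lemma pyreneR_quad {n : ℕ} (hn : 1 ≤ n) (k : ℕ) :
    pyreneR n k ^ 2 + 2 * pyreneS n k * pyreneR n k + 1 = 0 := by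
  have hd := pyreneD_sq hn k
  unfold pyreneR
  by_cases hb : k < n <;> simp only [hb, if_true, if_false] <;> linear_combination hd

lemma pyreneR_branch {n : ℕ} (hn : 1 ≤ n) (k : ℕ) :
    (k < n → pyreneR n k < -1) ∧ (¬ k < n → -1 < pyreneR n k) := by
  obtain ⟨hs1, hs3⟩ := pyreneS_mem hn k
  have hd := pyreneD_sq hn k
  have hdp := pyreneD_pos hn k
  constructor
  · intro hb; unfold pyreneR; simp only [hb, if_true]; nlinarith
  · intro hb; unfold pyreneR; simp only [hb, if_false]; nlinarith

lemma pyreneR_mem {n : ℕ} (hn : 1 ≤ n) (k : ℕ) :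
    pyreneR n k ∈ Set.Ioo (-3 - 2 * Real.sqrt 2) (-3 + 2 * Real.sqrt 2) := by
  obtain ⟨hs1, hs3⟩ := pyreneS_mem hn k
  have hd := pyreneD_sq hn k
  have hdp := pyreneD_pos hn k
  have h2 : Real.sqrt 2 ^ 2 = 2 := Real.sq_sqrt (by norm_num)
  have h2p : 0 < Real.sqrt 2 := Real.sqrt_pos.mpr (by norm_num)
  have h21 : 1 < Real.sqrt 2 := by nlinarith
  have hbr := pyreneR_branch hn k
  unfold pyreneR
  by_cases hb : k < n <;> simp only [hb, if_true, if_false] <;> constructor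
  · -- -3 - 2√2 < -s - d : need d < 3 + 2√2 - s
    have hrhs : 0 < 3 + 2 * Real.sqrt 2 - pyreneS n k := by nlinarith
    nlinarith [sq_nonneg (pyreneD n k - (3 + 2 * Real.sqrt 2 - pyreneS n k))]
  · -- -s - d < -3 + 2√2 : since -s - d < -1 < -3 + 2√2
    nlinarith
  · -- -3 - 2√2 < -s + d : since -1 < -s + d
    nlinarith [hd, hdp, sq_nonneg (pyreneD n k - (pyreneS n k - 1))]
  · -- -s + d < -3 + 2√2 : need d < s - 3 + 2√2
    have hrhs : 0 < pyreneS n k - 3 + 2 * Real.sqrt 2 := by nlinarith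
    have hlt : pyreneD n k < pyreneS n k - 3 + 2 * Real.sqrt 2 := by
      have h' := (Real.sqrt_lt' hrhs).mpr
        (show pyreneS n k ^ 2 - 1 < (pyreneS n k - 3 + 2 * Real.sqrt 2) ^ 2 by nlinarith)
      simpa [pyreneD] using h'
    linarith

lemma pyreneR_neg {n : ℕ} (hn : 1 ≤ n) (k : ℕ) : pyreneR n k < 0 := by
  obtain ⟨hs1, hs3⟩ := pyreneS_mem hn k
  have hd := pyreneD_sq hn k
  have hdp := pyreneD_pos hn k
  unfold pyreneR
  by_cases hb : k < n <;> simp only [hb, if_true, if_false] <;> nlinarith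

lemma pyreneR_rel {n : ℕ} (hn : 1 ≤ n) (k : ℕ) :
    pyreneR n k ^ 2 + 4 * pyreneR n k + 1 = 2 * pyreneR n k * Real.cos (pyreneTheta n k) := by
  have hq := pyreneR_quad hn k
  have hs : Real.cos (pyreneTheta n k) = 2 - pyreneS n k := by simp [pyreneS]
  rw [hs]
  linear_combination hq

lemma pyreneR_eval {n : ℕ} (hn : 1 ≤ n) (k : ℕ) :
    (pyreneP n).eval (pyreneR n k) = 0 := by
  have hform := pyreneP_eval_formula (pyreneR n k) (pyreneTheta n k) (pyreneR_rel hn k) n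
  obtain ⟨h0, h1⟩ := pyreneTheta_mem hn k
  have hsin : 0 < Real.sin (pyreneTheta n k) := Real.sin_pos_of_pos_of_lt_pi h0 h1
  have harg : ((n : ℝ) + 1) * pyreneTheta n k = ((k % n + 1 : ℕ) : ℝ) * Real.pi := by
    unfold pyreneTheta
    have : ((n : ℝ) + 1) ≠ 0 := by positivity
    field_simp
  have hz : Real.sin (((n : ℝ) + 1) * pyreneTheta n k) = 0 := by
    rw [harg]; exact Real.sin_nat_mul_pi _
  rw [hz, mul_zero] at hform
  exact (mul_eq_zero.mp hform).resolve_left (ne_of_gt hsin)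

lemma pyreneR_inj {n : ℕ} (hn : 1 ≤ n) {k l : ℕ} (hk : k < 2 * n) (hl : l < 2 * n)
    (h : pyreneR n k = pyreneR n l) : k = l := by
  have hbk := pyreneR_branch hn k
  have hbl := pyreneR_branch hn l
  -- same branch
  have hbranch : (k < n) ↔ (l < n) := by
    constructor
    · intro hkn
      by_contra hln
      have := hbk.1 hkn
      have := hbl.2 hln
      linarith [h ▸ this]
    · intro hln
      by_contra hkn
      have h1 := hbl.1 hln
      have h2 := hbk.2 hkn
      rw [← h] at h1
      linarith
  -- s equal
  have hqk := pyreneR_quad hn k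
  have hql := pyreneR_quad hn l
  rw [h] at hqk
  have hrneg := pyreneR_neg hn l
  have hseq : pyreneS n k = pyreneS n l := by
    have h2 : 2 * pyreneR n l * (pyreneS n k - pyreneS n l) = 0 := by linear_combination hqk - hql
    rcases mul_eq_zero.mp h2 with h3 | h3
    · exfalso; rcases mul_eq_zero.mp h3 with h4 | h4 <;> linarith
    · linarith
  -- theta equal
  have hθk := pyreneTheta_mem hn k
  have hθl := pyreneTheta_mem hn l
  have hcos : Real.cos (pyreneTheta n k) = Real.cos (pyreneTheta n l) := by
    have : (2 : ℝ) - Real.cos (pyreneTheta n k) = 2 - Real.cos (pyreneTheta n l) := hseq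
    linarith
  have hθeq : pyreneTheta n k = pyreneTheta n l :=
    Real.injOn_cos (Set.mem_Icc.mpr ⟨hθk.1.le, hθk.2.le⟩)
      (Set.mem_Icc.mpr ⟨hθl.1.le, hθl.2.le⟩) hcos
  -- mod equal
  have hmodeq : k % n = l % n := by
    unfold pyreneTheta at hθeq
    have hπ := Real.pi_pos
    have hden : ((n : ℝ) + 1) ≠ 0 := by positivity
    field_simp at hθeq
    have h' := hθeq
    norm_cast at h'
    omega
  -- conclude
  by_cases hkn : k < n
  · have hln : l < n := hbranch.mp hkn
    have : k % n = k := Nat.mod_eq_of_lt hkn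
    have : l % n = l := Nat.mod_eq_of_lt hln
    omega
  · have hln : ¬ l < n := fun hc => hkn (hbranch.mpr hc)
    have h1 : k % n = k - n := by
      rw [Nat.mod_eq_sub_mod (by omega)]
      exact Nat.mod_eq_of_lt (by omega)
    have h2 : l % n = l - n := by
      rw [Nat.mod_eq_sub_mod (by omega)]
      exact Nat.mod_eq_of_lt (by omega)
    omega

theorem pyreneP_real_zeros (n : ℕ) (hn : 1 ≤ n) :
    ∃ r : Fin (2 * n) → ℝ, Function.Injective r ∧
      (∀ k, r k ∈ Set.Ioo (-3 - 2 * Real.sqrt 2) (-3 + 2 * Real.sqrt 2) ∧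
        (pyreneP n).eval (r k) = 0) ∧
      (∀ z : ℂ, Polynomial.aeval z (pyreneP n) = 0 → ∃ k, z = (r k : ℂ)) := by
  classical
  obtain ⟨hPmonic, hPdeg⟩ := pyreneP_monic_deg n
  have hP0 : pyreneP n ≠ 0 := hPmonic.ne_zero
  set f : Fin (2 * n) → ℝ := fun i => pyreneR n i.val with hf
  have hfinj : Function.Injective f := by
    intro i j hij
    exact Fin.ext (pyreneR_inj hn i.isLt j.isLt hij)
  refine ⟨f, hfinj, fun k => ⟨pyreneR_mem hn k.val, pyreneR_eval hn k.val⟩, ?_⟩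
  -- show pyreneP n = ∏ (X - C (f i))
  set Q : Polynomial ℝ := ∏ i : Fin (2 * n), (X - C (f i)) with hQ
  have hQmonic : Q.Monic := monic_prod_of_monic _ _ fun i _ => monic_X_sub_C (f i)
  have hQdeg : Q.natDegree = 2 * n := by
    rw [hQ, natDegree_prod _ _ fun i _ => X_sub_C_ne_zero (f i)]
    simp
  have hdvd : Q ∣ pyreneP n := by
    have hnodup : (Finset.univ.val.map f).Nodup :=
      Finset.univ.nodup.map hfinj
    have hle : Finset.univ.val.map f ≤ (pyreneP n).roots := by
      rw [Multiset.le_iff_subset hnodup]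
      intro a ha
      obtain ⟨i, _, rfl⟩ := Multiset.mem_map.mp ha
      exact (mem_roots hP0).mpr (pyreneR_eval hn i.val)
    have := (Multiset.prod_X_sub_C_dvd_iff_le_roots hP0 (Finset.univ.val.map f)).mpr hle
    have heq : ((Finset.univ.val.map f).map fun a => X - C a).prod = Q := by
      rw [hQ, Finset.prod, Multiset.map_map]
      rfl
    rwa [heq] at this
  have hPQ : pyreneP n = Q := by
    obtain ⟨u, hu⟩ := hdvd
    have hu0 : u ≠ 0 := by
      intro h0; rw [h0, mul_zero] at hu; exact hP0 hu
    have hdeg : u.natDegree = 0 := by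
      have := natDegree_mul hQmonic.ne_zero hu0
      rw [← hu, hPdeg, hQdeg] at this
      omega
    have hlc : u.leadingCoeff = 1 := by
      have h1 : (pyreneP n).leadingCoeff = 1 := hPmonic
      rw [hu, leadingCoeff_mul, hQmonic.leadingCoeff, one_mul] at h1
      exact h1
    have : u = C (u.coeff 0) := eq_C_of_natDegree_eq_zero hdeg
    rw [hu, this]
    have : u.coeff 0 = 1 := by
      rw [this] at hlc
      simpa using hlc
    rw [this]
    simp
  intro z hz
  rw [hPQ] at hz
  have : (Polynomial.aeval z) Q = ∏ i : Fin (2 * n), (z - (f i : ℂ)) := by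
    rw [hQ, map_prod]
    congr 1
    funext i
    simp
  rw [this] at hz
  obtain ⟨i, _, hi⟩ := Finset.prod_eq_zero_iff.mp hz
  exact ⟨i, by linear_combination (norm := ring_nf) hi⟩
end

section
/- Let $P_n(x)$ be the sequence of real polynomials defined by $P_0(x)=1$, $P_1(x)=x^2+4x+1$, and $P_n(x)=(x^2+4x+1)P_{n-1}(x)-x^2P_{n-2}(x)$ for $n\ge 2$. Then for every $n\ge 1$ and every real $x$, $P_n(x)=\prod_{k=1}^{n}\left[(x+1)^2+4x\cos^2\frac{k\pi}{2n+2}\right]$. Consequently, the zeros of $P_n(x)$ are exactly the numbers $-r_k$ and $-1/r_k$ for $k=1,\dots,n$, where $r_k=\left(\sqrt{1+\cos^2\frac{k\pi}{2n+2}}+\cos\frac{k\pi}{2n+2}\right)^2$. -/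
open Polynomial Finset

lemma lemC (n : ℕ) (u : ℂ) :
    (u ^ 2 - 1) * ∏ k ∈ Finset.Icc 1 n, (u ^ 2 - 2 * u * Complex.cos (k * Real.pi / (n + 1)) + 1)
      = u ^ (2 * n + 2) - 1 := by
  set ζ : ℂ := Complex.exp (Real.pi * Complex.I / (n + 1)) with hζ
  have hn1 : ((n : ℂ) + 1) ≠ 0 := Nat.cast_add_one_ne_zero n
  have hprim : IsPrimitiveRoot ζ (2 * n + 2) := by
    have h := Complex.isPrimitiveRoot_exp (2 * n + 2) (by omega)
    have harg : 2 * (Real.pi : ℂ) * Complex.I / ((2 * n + 2 : ℕ) : ℂ)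
        = (Real.pi : ℂ) * Complex.I / ((n : ℂ) + 1) := by
      have h22 : ((2*n+2 : ℕ) : ℂ) ≠ 0 := Nat.cast_ne_zero.mpr (by omega)
      rw [div_eq_div_iff h22 hn1]
      push_cast
      ring
    rwa [harg] at h
  have hpoly := X_pow_sub_C_eq_prod hprim (by omega : 0 < 2 * n + 2)
      (one_pow (2 * n + 2) : (1:ℂ) ^ (2*n+2) = 1)
  have hev := congrArg (Polynomial.eval u) hpoly
  simp only [eval_sub, eval_pow, eval_X, eval_C, eval_prod, mul_one, map_one, eval_one] at hev
  rw [hev]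
  have hζpow : ∀ j : ℕ, ζ ^ j = Complex.exp ((j : ℂ) * (Real.pi * Complex.I / (n + 1))) := by
    intro j; rw [Complex.exp_nat_mul]
  have hfull : Complex.exp ((((2*n+2 : ℕ)) : ℂ) * (Real.pi * Complex.I / (n + 1))) = 1 := by
    have : (((2*n+2 : ℕ)) : ℂ) * (Real.pi * Complex.I / (n + 1)) = 2 * Real.pi * Complex.I := by
      push_cast; field_simp
    rw [this, Complex.exp_two_pi_mul_I]
  have hsplit : ∏ j ∈ range (2*n+2), (u - ζ ^ j)
      = ((u - ζ ^ 0) * ∏ j ∈ range n, (u - ζ ^ (j+1)))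
        * ((u - ζ ^ (n+1)) * ∏ j ∈ range n, (u - ζ ^ (n+2+j))) := by
    have h1 : 2*n+2 = (n+1) + (n+1) := by omega
    rw [h1, Finset.prod_range_add]
    congr 1
    · rw [Finset.prod_range_succ']
      ring
    · rw [Finset.prod_range_succ']
      simp only [Nat.add_zero]
      rw [mul_comm]
      congr 1
      apply Finset.prod_congr rfl
      intro j hj
      congr 2
      omega
  rw [hsplit]
  have hrefl : ∏ j ∈ range n, (u - ζ ^ (n+2+j)) = ∏ j ∈ range n, (u - ζ ^ (2*n+1-j)) := by
    rw [← Finset.prod_range_reflect]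
    apply Finset.prod_congr rfl
    intro j hj
    simp only [Finset.mem_range] at hj
    congr 2
    omega
  rw [hrefl]
  have hz0 : ζ ^ 0 = 1 := pow_zero ζ
  have hzn1 : ζ ^ (n+1) = -1 := by
    rw [hζpow]
    have : ((n+1 : ℕ) : ℂ) * (Real.pi * Complex.I / (n + 1)) = Real.pi * Complex.I := by
      push_cast; field_simp
    rw [this, Complex.exp_pi_mul_I]
  rw [hz0, hzn1]
  have hpair : ∀ j ∈ range n, (u - ζ ^ (j+1)) * (u - ζ ^ (2*n+1-j))
      = u ^ 2 - 2 * u * Complex.cos (((j:ℂ)+1) * Real.pi / (n + 1)) + 1 := by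
    intro j hj
    simp only [Finset.mem_range] at hj
    set b : ℂ := ((j+1 : ℕ) : ℂ) * (Real.pi * Complex.I / (n+1)) with hb
    have e0 : ζ ^ (j+1) = Complex.exp b := hζpow (j+1)
    have e1 : ζ ^ (2*n+1-j) = Complex.exp (-b) := by
      have h2 : ζ ^ (2*n+1-j) * ζ ^ (j+1) = 1 := by
        rw [← pow_add]
        have h3 : 2*n+1-j + (j+1) = 2*n+2 := by omega
        rw [h3, hζpow]
        exact hfull
      rw [e0] at h2
      rw [eq_inv_of_mul_eq_one_left h2, ← Complex.exp_neg]
    rw [e0, e1]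
    have hmul : Complex.exp b * Complex.exp (-b) = 1 := by
      rw [← Complex.exp_add]; simp
    have hsum : Complex.exp b + Complex.exp (-b)
        = 2 * Complex.cos (((j:ℂ)+1) * Real.pi / (n+1)) := by
      have hbw : b = ((((j:ℂ)+1)) * Real.pi / (n+1)) * Complex.I := by rw [hb]; push_cast; ring
      rw [hbw, Complex.cos]
      ring
    linear_combination (-u) * hsum + hmul
  have hAB : (∏ j ∈ range n, (u - ζ ^ (j+1))) * (∏ j ∈ range n, (u - ζ ^ (2*n+1-j)))
      = ∏ j ∈ range n, (u ^ 2 - 2 * u * Complex.cos (((j:ℂ)+1) * Real.pi / (n + 1)) + 1) := by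
    rw [← Finset.prod_mul_distrib]; exact Finset.prod_congr rfl hpair
  have hicc : ∏ k ∈ Finset.Icc 1 n, (u ^ 2 - 2 * u * Complex.cos (k * Real.pi / (n + 1)) + 1)
      = ∏ j ∈ range n, (u ^ 2 - 2 * u * Complex.cos (((j:ℂ)+1) * Real.pi / (n + 1)) + 1) := by
    rw [← Finset.Ico_add_one_right_eq_Icc, Finset.prod_Ico_eq_prod_range]
    apply Finset.prod_congr rfl
    intro j hj
    push_cast
    ring_nf
  rw [hicc, ← hAB]
  ring

lemma lemA (n : ℕ) (u : ℝ) :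
    (u ^ 2 - 1) * ∏ k ∈ Finset.Icc 1 n, (u ^ 2 - 2 * u * Real.cos (k * Real.pi / (n + 1)) + 1)
      = u ^ (2 * n + 2) - 1 := by
  exact_mod_cast lemC n (u : ℂ)

lemma pyrene_closed (x α β : ℝ) (hs : α + β = x ^ 2 + 4 * x + 1) (hp : α * β = x ^ 2) :
    ∀ m : ℕ, (α - β) * (pyreneP m).eval x = α ^ (m+1) - β ^ (m+1) := by
  have key : ∀ m : ℕ, ((α - β) * (pyreneP m).eval x = α ^ (m+1) - β ^ (m+1)) ∧
      ((α - β) * (pyreneP (m+1)).eval x = α ^ (m+2) - β ^ (m+2)) := by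
    intro m
    induction m with
    | zero =>
      constructor
      · simp [pyreneP]
      · simp only [pyreneP, eval_add, eval_mul, eval_pow, eval_X, eval_one, eval_ofNat]
        linear_combination (β - α) * hs
    | succ k ih =>
      refine ⟨ih.2, ?_⟩
      show (α - β) * (pyreneP (k+2)).eval x = _
      rw [pyreneP]
      simp only [eval_sub, eval_mul, eval_add, eval_pow, eval_X, eval_one, eval_ofNat]
      linear_combination (x^2+4*x+1) * ih.2 - x^2 * ih.1 - (α^(k+2)-β^(k+2)) * hs
        + (α^(k+1)-β^(k+1)) * hp
  exact fun m => (key m).1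

lemma key_abstract (n : ℕ) (x α β : ℝ) (hx : 0 < x) (hs : α + β = x^2 + 4*x + 1)
    (hp : α * β = x^2) (hαpos : 0 < α) (hβα : β < α) :
    (pyreneP n).eval x
      = ∏ k ∈ Finset.Icc 1 n, (x^2 + 4*x + 1 - 2*x*Real.cos (k * Real.pi / (n + 1))) := by
  have hxne : x ≠ 0 := hx.ne'
  have H1 := pyrene_closed x α β hs hp n
  have H2 := lemA n (α / x)
  set P := ∏ k ∈ Finset.Icc 1 n, (x^2 + 4*x + 1 - 2*x*Real.cos (k * Real.pi / (n + 1))) with hP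
  set Q := ∏ k ∈ Finset.Icc 1 n,
      ((α/x)^2 - 2*(α/x)*Real.cos (k * Real.pi / (n + 1)) + 1) with hQ
  have hu : x * (α/x) = α := by field_simp
  have hcard : (Finset.Icc 1 n).card = n := by simp
  have C1 : (x^2)^n * Q = α^n * P := by
    have e1 : ∏ k ∈ Finset.Icc 1 n,
        (x^2 * ((α/x)^2 - 2*(α/x)*Real.cos (k * Real.pi / (n + 1)) + 1))
        = (x^2)^n * Q := by
      rw [hQ, Finset.prod_mul_distrib, Finset.prod_const, hcard]
    have e2 : ∏ k ∈ Finset.Icc 1 n,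
        (α * (x^2 + 4*x + 1 - 2*x*Real.cos (k * Real.pi / (n + 1))))
        = α^n * P := by
      rw [hP, Finset.prod_mul_distrib, Finset.prod_const, hcard]
    rw [← e1, ← e2]
    apply Finset.prod_congr rfl
    intro k _
    linear_combination (x * (α/x) + α - 2*x*Real.cos (k * Real.pi / (n + 1))) * hu
      + α * hs - hp
  have h4 : x^2 * ((α/x)^2 - 1) = α^2 - x^2 := by
    field_simp
  have h5 : (α/x)^(2*n+2) * x^(2*n+2) = α^(2*n+2) := by
    rw [div_pow, div_mul_cancel₀]
    exact pow_ne_zero _ hxne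
  have H3 : (α^2 - x^2) * (α^n * P) = α^(2*n+2) - x^(2*n+2) := by
    calc (α^2 - x^2) * (α^n * P) = (x^2 * ((α/x)^2 - 1)) * ((x^2)^n * Q) := by
          rw [h4, C1]
      _ = (((α/x)^2 - 1) * Q) * x^(2*n+2) := by ring
      _ = ((α/x)^(2*n+2) - 1) * x^(2*n+2) := by rw [H2]
      _ = α^(2*n+2) - x^(2*n+2) := by rw [sub_mul, h5, one_mul]
  have hxpow : x^(2*n+2) = α^(n+1) * β^(n+1) := by
    rw [← mul_pow, hp]; ring
  have H4 : α^(n+1) * ((α - β) * P) = α^(n+1) * ((α - β) * (pyreneP n).eval x) := by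
    calc α^(n+1) * ((α - β) * P) = (α^2 - x^2) * (α^n * P)
            + (α^n * P) * (x^2 - α * β) := by ring
      _ = α^(2*n+2) - x^(2*n+2) := by rw [H3]; linear_combination -(α^n * P) * hp
      _ = α^(n+1) * (α^(n+1) - β^(n+1)) := by rw [hxpow]; ring
      _ = α^(n+1) * ((α - β) * (pyreneP n).eval x) := by rw [H1]
  have H5 := mul_left_cancel₀ (pow_ne_zero (n+1) hαpos.ne') H4
  have H6 := mul_left_cancel₀ (sub_ne_zero.mpr hβα.ne') H5
  exact H6.symm

lemma key_pos (n : ℕ) (x : ℝ) (hx : 0 < x) :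
    (pyreneP n).eval x
      = ∏ k ∈ Finset.Icc 1 n, (x^2 + 4*x + 1 - 2*x*Real.cos (k * Real.pi / (n + 1))) := by
  have hd : 0 < (x^2+4*x+1)^2 - 4*x^2 := by nlinarith [sq_nonneg (x+1), sq_nonneg x, hx]
  have hDpos : 0 < Real.sqrt ((x^2+4*x+1)^2 - 4*x^2) := Real.sqrt_pos.mpr hd
  have hDsq : Real.sqrt ((x^2+4*x+1)^2 - 4*x^2) ^ 2 = (x^2+4*x+1)^2 - 4*x^2 :=
    Real.sq_sqrt hd.le
  exact key_abstract n x (((x^2+4*x+1) + Real.sqrt ((x^2+4*x+1)^2 - 4*x^2))/2)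
      (((x^2+4*x+1) - Real.sqrt ((x^2+4*x+1)^2 - 4*x^2))/2) hx
      (by ring)
      (by linear_combination (-(1:ℝ)/4) * hDsq)
      (by nlinarith [hDpos, hx, sq_nonneg x])
      (by linarith)

lemma prod_reindex (n : ℕ) (x : ℝ) :
    ∏ k ∈ Finset.Icc 1 n, ((x + 1) ^ 2 + 4 * x * Real.cos (k * Real.pi / (2 * n + 2)) ^ 2)
      = ∏ k ∈ Finset.Icc 1 n, (x^2 + 4*x + 1 - 2*x*Real.cos (k * Real.pi / (n + 1))) := by
  refine Finset.prod_nbij' (fun k => n + 1 - k) (fun k => n + 1 - k) ?_ ?_ ?_ ?_ ?_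
  · intro k hk; simp only [Finset.mem_Icc] at *; omega
  · intro k hk; simp only [Finset.mem_Icc] at *; omega
  · intro k hk; simp only [Finset.mem_Icc] at hk; show n + 1 - (n + 1 - k) = k; omega
  · intro k hk; simp only [Finset.mem_Icc] at hk; show n + 1 - (n + 1 - k) = k; omega
  · intro k hk
    simp only [Finset.mem_Icc] at hk
    have hn2 : ((2:ℝ)*n + 2) ≠ 0 := by positivity
    have hcast : ((n + 1 - k : ℕ) : ℝ) = (n : ℝ) + 1 - k := by
      have : (k : ℕ) ≤ n + 1 := by omega
      push_cast [Nat.cast_sub this]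
      ring
    have harg : ((n : ℝ) + 1 - k) * Real.pi / (2*n + 2)
        = Real.pi / 2 - (k : ℝ) * Real.pi / (2*n + 2) := by
      field_simp
    have hdouble : Real.cos ((n+1-k : ℕ) * Real.pi / ((n:ℝ) + 1))
        = 2 * Real.cos ((n+1-k : ℕ) * Real.pi / (2*(n:ℝ) + 2)) ^ 2 - 1 := by
      have h2y : ((n+1-k : ℕ):ℝ) * Real.pi / ((n:ℝ)+1)
          = 2 * (((n+1-k : ℕ):ℝ) * Real.pi / (2*(n:ℝ) + 2)) := by
        field_simp
      rw [h2y, Real.cos_two_mul]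
    rw [hdouble, hcast, harg, Real.cos_pi_div_two_sub, Real.sin_sq]
    ring

lemma part1 (n : ℕ) (x : ℝ) :
    (pyreneP n).eval x = ∏ k ∈ Finset.Icc 1 n,
      ((x + 1) ^ 2 + 4 * x * Real.cos (k * Real.pi / (2 * n + 2)) ^ 2) := by
  have hpoly : pyreneP n = ∏ k ∈ Finset.Icc 1 n,
      ((X + 1) ^ 2 + C (4 * Real.cos (k * Real.pi / (2 * (n:ℝ) + 2)) ^ 2) * X) := by
    apply Polynomial.eq_of_infinite_eval_eq
    apply Set.Infinite.mono (s := Set.Ioi (0:ℝ)) ?_ (Set.Ioi_infinite 0)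
    intro y hy
    simp only [Set.mem_setOf_eq, eval_prod, eval_add, eval_mul, eval_pow, eval_X, eval_one,
      eval_C]
    rw [key_pos n y hy, ← prod_reindex n y]
    apply Finset.prod_congr rfl
    intro k _
    ring
  rw [hpoly, eval_prod]
  apply Finset.prod_congr rfl
  intro k _
  simp only [eval_add, eval_mul, eval_pow, eval_X, eval_one, eval_C]
  ring

theorem pyreneP_factorization (n : ℕ) (hn : 1 ≤ n) (r : ℕ → ℝ)
    (hr : ∀ k, r k = (Real.sqrt (1 + Real.cos (k * Real.pi / (2 * n + 2)) ^ 2) +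
      Real.cos (k * Real.pi / (2 * n + 2))) ^ 2) :
    (∀ x : ℝ, (pyreneP n).eval x =
      ∏ k ∈ Finset.Icc 1 n,
        ((x + 1) ^ 2 + 4 * x * Real.cos (k * Real.pi / (2 * n + 2)) ^ 2)) ∧
    (∀ x : ℝ, (pyreneP n).eval x = 0 ↔
      ∃ k ∈ Finset.Icc 1 n, x = -(r k) ∨ x = -(1 / r k)) := by
  refine ⟨fun x => part1 n x, fun x => ?_⟩
  rw [part1 n x, Finset.prod_eq_zero_iff]
  have hfac : ∀ k : ℕ, ((x + 1) ^ 2 + 4 * x * Real.cos (k * Real.pi / (2 * n + 2)) ^ 2 = 0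
      ↔ (x = -(r k) ∨ x = -(1 / r k))) := by
    intro k
    set c : ℝ := Real.cos (k * Real.pi / (2 * n + 2)) with hc
    set a : ℝ := Real.sqrt (1 + c ^ 2) with ha
    have ha2 : a ^ 2 = 1 + c ^ 2 := Real.sq_sqrt (by positivity)
    have habs : |c| < a := by
      rw [ha, ← Real.sqrt_sq_eq_abs]
      exact Real.sqrt_lt_sqrt (sq_nonneg c) (by linarith)
    have hsum : 0 < a + c := by
      have := neg_abs_le c
      linarith
    have hrk : r k = (a + c) ^ 2 := hr k
    have hrpos : 0 < r k := by rw [hrk]; positivity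
    have hone : (a + c) ^ 2 * (a - c) ^ 2 = 1 := by
      linear_combination (a ^ 2 - c ^ 2 + 1) * ha2
    have hrinv : 1 / r k = (a - c) ^ 2 := by
      rw [eq_comm, eq_div_iff hrpos.ne', hrk, mul_comm]
      exact hone
    have hfactor : (x + 1) ^ 2 + 4 * x * c ^ 2 = (x + r k) * (x + 1 / r k) := by
      rw [hrinv, hrk]
      linear_combination -(2 * x + 1 + a ^ 2 - c ^ 2) * ha2
    rw [hfactor, mul_eq_zero, add_eq_zero_iff_eq_neg, add_eq_zero_iff_eq_neg]
  constructor
  · rintro ⟨k, hk, h⟩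
    exact ⟨k, hk, (hfac k).mp h⟩
  · rintro ⟨k, hk, h⟩
    exact ⟨k, hk, (hfac k).mpr h⟩
end

section
/- Let $P_n(x)$ be the sequence of real polynomials defined by $P_0(x)=1$, $P_1(x)=x^2+4x+1$, and $P_n(x)=(x^2+4x+1)P_{n-1}(x)-x^2P_{n-2}(x)$ for $n\ge 2$, and let $D_n(x)$ be the Delannoy polynomials defined by $D_0(x)=1$, $D_1(x)=x+1$, and $D_n(x)=(x+1)D_{n-1}(x)+xD_{n-2}(x)$ for $n\ge 2$. Then for every $n\ge 0$, $(x+1)\,P_n(x)=D_{2n+1}(x)$ as polynomials. -/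
open Polynomial

/-- The Delannoy polynomials. -/
noncomputable def delannoyD : ℕ → Polynomial ℝ
  | 0 => 1
  | 1 => X + 1
  | (n + 2) => (X + 1) * delannoyD (n + 1) + X * delannoyD n

theorem pyreneP_delannoy (n : ℕ) :
    (X + 1) * pyreneP n = delannoyD (2 * n + 1) := by
  induction n using Nat.twoStepInduction with
  | zero => simp [pyreneP, delannoyD]
  | one =>
      show (X + 1) * pyreneP 1 = delannoyD 3
      show (X + 1) * pyreneP 1 = (X + 1) * delannoyD 2 + X * delannoyD 1
      show (X + 1) * pyreneP 1 =
        (X + 1) * ((X + 1) * delannoyD 1 + X * delannoyD 0) + X * delannoyD 1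
      simp only [pyreneP, delannoyD]
      ring
  | more n ih1 ih2 =>
      have h1 : 2 * (n + 2) + 1 = (2 * n + 3) + 2 := by ring
      have h2 : 2 * (n + 1) + 1 = (2 * n + 1) + 2 := by ring
      rw [h1, delannoyD, delannoyD, delannoyD]
      rw [h2, delannoyD] at ih2
      show (X + 1) * ((X ^ 2 + 4 * X + 1) * pyreneP (n + 1) - X ^ 2 * pyreneP n) = _
      have hP : (X + 1) * pyreneP (n + 1) =
          (X + 1) * delannoyD (2 * n + 2) + X * delannoyD (2 * n + 1) := ih2
      have hQ : (X + 1) * pyreneP n = delannoyD (2 * n + 1) := ih1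
      linear_combination (X ^ 2 + 4 * X + 1 : Polynomial ℝ) * hP
        - (X : Polynomial ℝ) ^ 2 * hQ
        + ((X : Polynomial ℝ) ^ 2 + X) * ih2
        - ((X : Polynomial ℝ) + 1) ^ 2 * ih2 + ((X : Polynomial ℝ) + 1) * ih2
end

section
/- Let $P_n(x)$ be the sequence of real polynomials defined by $P_0(x)=1$, $P_1(x)=x^2+4x+1$, and $P_n(x)=(x^2+4x+1)P_{n-1}(x)-x^2P_{n-2}(x)$ for $n\ge 2$, and write $s(P_n,k)$ for the coefficient of $x^k$ in $P_n(x)$. Then for every $n\ge 0$, the coefficient sequence is symmetric: $s(P_n,k)=s(P_n,2n-k)$ for all $0\le k\le 2n$. -/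
open Polynomial

lemma pyreneP_natDegree_le (n : ℕ) : (pyreneP n).natDegree ≤ 2 * n := by
  induction n using Nat.strong_induction_on with
  | _ n ih =>
    match n with
    | 0 => simp [pyreneP]
    | 1 =>
      show (X ^ 2 + 4 * X + 1 : Polynomial ℝ).natDegree ≤ 2
      compute_degree
    | (m + 2) =>
      have h1 := ih (m + 1) (by omega)
      have h0 := ih m (by omega)
      show ((X ^ 2 + 4 * X + 1) * pyreneP (m + 1) - X ^ 2 * pyreneP m).natDegree ≤ 2 * (m + 2)
      refine le_trans (natDegree_sub_le _ _) (max_le ?_ ?_)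
      · refine le_trans (natDegree_mul_le) ?_
        have : (X ^ 2 + 4 * X + 1 : Polynomial ℝ).natDegree ≤ 2 := by compute_degree
        omega
      · refine le_trans (natDegree_mul_le) ?_
        have : (X ^ 2 : Polynomial ℝ).natDegree ≤ 2 := by compute_degree
        omega

lemma reflect_reflect' (N : ℕ) (f : Polynomial ℝ) : reflect N (reflect N f) = f := by
  ext i
  simp [coeff_reflect, revAt_invol]

lemma pyreneP_reflect (n : ℕ) : reflect (2 * n) (pyreneP n) = pyreneP n := by
  induction n using Nat.strong_induction_on with
  | _ n ih =>
    match n with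
    | 0 =>
      show reflect 0 (pyreneP 0) = pyreneP 0
      simp [pyreneP]
    | 1 =>
      show reflect 2 (pyreneP 1) = pyreneP 1
      show reflect 2 (X ^ 2 + 4 * X + 1 : Polynomial ℝ) = X ^ 2 + 4 * X + 1
      ext i
      simp only [coeff_reflect]
      rcases i with _ | _ | _ | i
      · simp [revAt_le, coeff_one, coeff_X]
      · simp [revAt_le, coeff_one, coeff_X]
      · simp [revAt_le, coeff_one, coeff_X]
      · rw [revAt_eq_self_of_lt (by omega)]
    | (m + 2) =>
      have h1 := ih (m + 1) (by omega)
      have h0 := ih m (by omega)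
      have d1 := pyreneP_natDegree_le (m + 1)
      have d0 := pyreneP_natDegree_le m
      have dQ : (X ^ 2 + 4 * X + 1 : Polynomial ℝ).natDegree ≤ 2 := by compute_degree
      have dX : (X ^ 2 : Polynomial ℝ).natDegree ≤ 2 := by compute_degree
      show reflect (2 * (m + 2)) ((X ^ 2 + 4 * X + 1) * pyreneP (m + 1) - X ^ 2 * pyreneP m)
        = (X ^ 2 + 4 * X + 1) * pyreneP (m + 1) - X ^ 2 * pyreneP m
      rw [reflect_sub]
      have e1 : (2 : ℕ) * (m + 2) = 2 + 2 * (m + 1) := by ring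
      rw [e1, reflect_mul _ _ dQ d1, reflect_mul _ _ dX (d0.trans (by omega)), h1]
      have hQ : reflect 2 (X ^ 2 + 4 * X + 1 : Polynomial ℝ) = X ^ 2 + 4 * X + 1 := by
        ext i
        simp only [coeff_reflect]
        rcases i with _ | _ | _ | i
        · simp [revAt_le, coeff_one, coeff_X]
        · simp [revAt_le, coeff_one, coeff_X]
        · simp [revAt_le, coeff_one, coeff_X]
        · rw [revAt_eq_self_of_lt (by omega)]
      have hX : reflect 2 (X ^ 2 : Polynomial ℝ) = 1 := by
        rw [reflect_monomial 2 2]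
        simp [revAt_le, coeff_one, coeff_X]
      rw [hQ, hX, one_mul]
      have e2 : (2 : ℕ) * (m + 1) = 2 * m + 2 := by ring
      rw [e2]
      have key : reflect (2 + 2 * m) (X ^ 2 * pyreneP m) = pyreneP m := by
        rw [reflect_mul _ _ dX d0, hX, one_mul, h0]
      have key2 : reflect (2 * m + 2) (pyreneP m) = X ^ 2 * pyreneP m := by
        have := congrArg (reflect (2 + 2 * m)) key
        rw [reflect_reflect'] at this
        rw [show 2 * m + 2 = 2 + 2 * m by ring, this]
      rw [key2]

theorem pyreneP_coeff_symmetric (n k : ℕ) (hk : k ≤ 2 * n) :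
    (pyreneP n).coeff k = (pyreneP n).coeff (2 * n - k) := by
  have h := pyreneP_reflect n
  have := congrArg (fun p => Polynomial.coeff p k) h
  simpa [coeff_reflect, revAt_le hk] using this.symm
end

section
/- Let $P_n(x)$ be the sequence of real polynomials defined by $P_0(x)=1$, $P_1(x)=x^2+4x+1$, and $P_n(x)=(x^2+4x+1)P_{n-1}(x)-x^2P_{n-2}(x)$ for $n\ge 2$, and write $s(P_n,k)$ for the coefficient of $x^k$ in $P_n(x)$. Then for every $n\ge 0$, the coefficient sequence $s(P_n,0),s(P_n,1),\dots,s(P_n,2n)$ is unimodal: it is nondecreasing for $0\le k\le n$ and nonincreasing for $n\le k\le 2n$. -/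
open Polynomial Finset

/-- coefficients in the closed form -/
def pc (n m : ℕ) : ℕ := (n + m + 1).choose (2 * m + 1)

/-- the closed form -/
noncomputable def pS (n : ℕ) : Polynomial ℝ :=
  ∑ m ∈ Finset.range (n + 1), C (pc n m : ℝ) * ((X + 1) ^ (2 * m) * X ^ (n - m))

lemma pc_eq_zero {n m : ℕ} (h : n < m) : pc n m = 0 :=
  Nat.choose_eq_zero_of_lt (by omega)

lemma pc_key (b j : ℕ) :
    (b + 4).choose (2 * j + 3) + (b + 2).choose (2 * j + 3)
      = (b + 2).choose (2 * j + 1) + 2 * (b + 3).choose (2 * j + 3) := by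
  have h1 : (b + 4).choose (2 * j + 3)
      = (b + 3).choose (2 * j + 2) + (b + 3).choose (2 * j + 3) := by
    rw [show b + 4 = (b + 3) + 1 by omega, show 2 * j + 3 = (2 * j + 2) + 1 by omega]
    exact Nat.choose_succ_succ _ _
  have h2 : (b + 3).choose (2 * j + 2)
      = (b + 2).choose (2 * j + 1) + (b + 2).choose (2 * j + 2) := by
    rw [show b + 3 = (b + 2) + 1 by omega, show 2 * j + 2 = (2 * j + 1) + 1 by omega]
    exact Nat.choose_succ_succ _ _
  have h3 : (b + 3).choose (2 * j + 3)
      = (b + 2).choose (2 * j + 2) + (b + 2).choose (2 * j + 3) := by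
    rw [show b + 3 = (b + 2) + 1 by omega, show 2 * j + 3 = (2 * j + 2) + 1 by omega]
    exact Nat.choose_succ_succ _ _
  rw [h1, h2, h3]; ring

lemma pS_step (n : ℕ) :
    (X ^ 2 + 4 * X + 1) * pS (n + 1) - X ^ 2 * pS n = pS (n + 2) := by
  rw [sub_eq_iff_eq_add]
  have lhs_eq : (X ^ 2 + 4 * X + 1) * pS (n + 1)
      = (∑ m ∈ Finset.range (n + 3),
          (if m = 0 then 0 else C (pc (n + 1) (m - 1) : ℝ))
            * ((X + 1) ^ (2 * m) * X ^ (n + 2 - m)))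
        + ∑ m ∈ Finset.range (n + 3),
            C (2 * pc (n + 1) m : ℝ) * ((X + 1) ^ (2 * m) * X ^ (n + 2 - m)) := by
    rw [pS, Finset.mul_sum]
    have hterm : ∀ m ∈ Finset.range (n + 2),
        (X ^ 2 + 4 * X + 1) * (C (pc (n + 1) m : ℝ) * ((X + 1) ^ (2 * m) * X ^ (n + 1 - m)))
          = C (pc (n + 1) m : ℝ) * ((X + 1) ^ (2 * (m + 1)) * X ^ (n + 2 - (m + 1)))
            + C (2 * pc (n + 1) m : ℝ) * ((X + 1) ^ (2 * m) * X ^ (n + 2 - m)) := by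
      intro m hm
      rw [Finset.mem_range] at hm
      rw [show n + 2 - (m + 1) = n + 1 - m by omega,
        show n + 2 - m = (n + 1 - m) + 1 by omega,
        show 2 * (m + 1) = 2 * m + 2 by omega, pow_add, pow_add]
      simp only [map_mul, map_ofNat]
      ring
    rw [Finset.sum_congr rfl hterm, Finset.sum_add_distrib]
    congr 1
    · rw [show n + 3 = (n + 2) + 1 by omega]
      rw [Finset.sum_range_succ' (fun m =>
        (if m = 0 then 0 else C (pc (n + 1) (m - 1) : ℝ))
          * ((X + 1) ^ (2 * m) * X ^ (n + 2 - m))) (n + 2)]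
      simp
    · refine Finset.sum_subset (Finset.range_subset_range.2 (by omega)) ?_
      intro m hm hm'
      rw [Finset.mem_range] at hm hm'
      rw [pc_eq_zero (show n + 1 < m by omega)]
      simp
  rw [lhs_eq, pS, pS]
  have hX2 : X ^ 2 * ∑ m ∈ Finset.range (n + 1), C (pc n m : ℝ) * ((X + 1) ^ (2 * m) * X ^ (n - m))
      = ∑ m ∈ Finset.range (n + 3), C (pc n m : ℝ) * ((X + 1) ^ (2 * m) * X ^ (n + 2 - m)) := by
    calc X ^ 2 * ∑ m ∈ Finset.range (n + 1), C (pc n m : ℝ) * ((X + 1) ^ (2 * m) * X ^ (n - m))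
        = ∑ m ∈ Finset.range (n + 1), C (pc n m : ℝ) * ((X + 1) ^ (2 * m) * X ^ (n + 2 - m)) := by
          rw [Finset.mul_sum]
          refine Finset.sum_congr rfl ?_
          intro m hm
          rw [Finset.mem_range] at hm
          rw [show n + 2 - m = (n - m) + 2 by omega, pow_add]
          ring
      _ = ∑ m ∈ Finset.range (n + 3), C (pc n m : ℝ) * ((X + 1) ^ (2 * m) * X ^ (n + 2 - m)) := by
          refine Finset.sum_subset (Finset.range_subset_range.2 (by omega)) ?_
          intro m hm hm'
          rw [Finset.mem_range] at hm hm'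
          rw [pc_eq_zero (show n < m by omega)]
          simp
  rw [hX2, ← Finset.sum_add_distrib, ← Finset.sum_add_distrib]
  refine Finset.sum_congr rfl ?_
  intro m hm
  rw [Finset.mem_range] at hm
  rw [← add_mul, ← add_mul]
  congr 1
  rcases Nat.eq_zero_or_pos m with h0 | h0
  · subst h0
    have key0 : 2 * pc (n + 1) 0 = pc (n + 2) 0 + pc n 0 := by
      simp only [pc, Nat.mul_zero, Nat.zero_add, Nat.add_zero, Nat.choose_one_right]
      omega
    have key0' : (2 : ℝ) * (pc (n + 1) 0 : ℝ) = ((pc (n + 2) 0 : ℕ) : ℝ) + ((pc n 0 : ℕ) : ℝ) := by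
      exact_mod_cast congrArg (Nat.cast : ℕ → ℝ) key0
    rw [if_pos rfl, zero_add, key0', map_add]
  · obtain ⟨j, rfl⟩ : ∃ j, m = j + 1 := ⟨m - 1, by omega⟩
    have key : pc (n + 1) j + 2 * pc (n + 1) (j + 1) = pc (n + 2) (j + 1) + pc n (j + 1) := by
      unfold pc
      rw [show n + 1 + j + 1 = n + j + 2 by omega,
        show n + 1 + (j + 1) + 1 = n + j + 3 by omega,
        show n + 2 + (j + 1) + 1 = n + j + 4 by omega,
        show n + (j + 1) + 1 = n + j + 2 by omega,
        show 2 * (j + 1) + 1 = 2 * j + 3 by omega]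
      exact (pc_key (n + j) j).symm
    simp only [if_neg (by omega : ¬ j + 1 = 0), Nat.add_sub_cancel]
    have key' : ((pc (n + 1) j : ℕ) : ℝ) + 2 * ((pc (n + 1) (j + 1) : ℕ) : ℝ)
        = ((pc (n + 2) (j + 1) : ℕ) : ℝ) + ((pc n (j + 1) : ℕ) : ℝ) := by
      exact_mod_cast congrArg (Nat.cast : ℕ → ℝ) key
    rw [← map_add, key', map_add]

lemma pS_zero : pS 0 = 1 := by
  simp [pS, pc]

lemma pS_one : pS 1 = X ^ 2 + 4 * X + 1 := by
  rw [pS]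
  norm_num [Finset.sum_range_succ, pc]
  ring

lemma pyreneP_eq (n : ℕ) : pyreneP n = pS n := by
  suffices h : ∀ n, pyreneP n = pS n ∧ pyreneP (n + 1) = pS (n + 1) from (h n).1
  intro n
  induction n with
  | zero =>
    constructor
    · rw [pS_zero]; rfl
    · rw [pS_one]; rfl
  | succ k ih =>
    refine ⟨ih.2, ?_⟩
    show pyreneP (k + 2) = pS (k + 2)
    rw [pyreneP, ih.1, ih.2, pS_step]

lemma pS_coeff (n k : ℕ) :
    (pS n).coeff k = ∑ m ∈ Finset.range (n + 1),
      (pc n m : ℝ) * (if n - m ≤ k then ((2 * m).choose (k - (n - m)) : ℝ) else 0) := by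
  rw [pS, Polynomial.finset_sum_coeff]
  refine Finset.sum_congr rfl ?_
  intro m hm
  rw [Polynomial.coeff_C_mul, Polynomial.coeff_mul_X_pow', Polynomial.coeff_X_add_one_pow]

lemma choose_anti {m j : ℕ} (h : m ≤ j) : (2 * m).choose (j + 1) ≤ (2 * m).choose j := by
  rcases le_or_gt (j + 1) (2 * m) with hle | hlt
  · rw [← Nat.choose_symm hle, ← Nat.choose_symm (show j ≤ 2 * m by omega),
      show 2 * m - j = (2 * m - (j + 1)) + 1 by omega]
    exact Nat.choose_le_succ_of_lt_half_left (by omega)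
  · rw [Nat.choose_eq_zero_of_lt hlt]
    exact Nat.zero_le _

theorem pyreneP_coeff_unimodal (n : ℕ) :
    (∀ k, k < n → (pyreneP n).coeff k ≤ (pyreneP n).coeff (k + 1)) ∧
    (∀ k, n ≤ k → k < 2 * n → (pyreneP n).coeff (k + 1) ≤ (pyreneP n).coeff k) := by
  constructor
  · intro k hk
    rw [pyreneP_eq, pS_coeff, pS_coeff]
    refine Finset.sum_le_sum ?_
    intro m hm
    rw [Finset.mem_range] at hm
    refine mul_le_mul_of_nonneg_left ?_ (Nat.cast_nonneg _)
    by_cases h1 : n - m ≤ k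
    · rw [if_pos h1, if_pos (by omega), show k + 1 - (n - m) = (k - (n - m)) + 1 by omega]
      exact_mod_cast Nat.choose_le_succ_of_lt_half_left (show k - (n - m) < 2 * m / 2 by omega)
    · rw [if_neg h1]
      split
      · exact Nat.cast_nonneg _
      · exact le_refl 0
  · intro k hk1 hk2
    rw [pyreneP_eq, pS_coeff, pS_coeff]
    refine Finset.sum_le_sum ?_
    intro m hm
    rw [Finset.mem_range] at hm
    refine mul_le_mul_of_nonneg_left ?_ (Nat.cast_nonneg _)
    rw [if_pos (show n - m ≤ k by omega), if_pos (show n - m ≤ k + 1 by omega),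
      show k + 1 - (n - m) = (k - (n - m)) + 1 by omega]
    exact_mod_cast choose_anti (show m ≤ k - (n - m) by omega)
end

section
/- Let $P_n(x)$ be the sequence of real polynomials defined by $P_0(x)=1$, $P_1(x)=x^2+4x+1$, and $P_n(x)=(x^2+4x+1)P_{n-1}(x)-x^2P_{n-2}(x)$ for $n\ge 2$. Then for every $n\ge 0$, $P_n'(1)=n\,P_n(1)$; equivalently, the mean of the coefficient distribution of $P_n$ is $\mu_n=\sum_{k=0}^{2n}k\,s(P_n,k)\big/\sum_{k=0}^{2n}s(P_n,k)=n$. -/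
open Polynomial

lemma pyreneP_eval_one_pos (n : ℕ) :
    0 < (pyreneP n).eval 1 ∧ (pyreneP n).eval 1 ≤ (pyreneP (n + 1)).eval 1 := by
  induction n with
  | zero => norm_num [pyreneP]
  | succ m ih =>
    have h2 : (pyreneP (m + 2)).eval 1
        = 6 * (pyreneP (m + 1)).eval 1 - (pyreneP m).eval 1 := by
      show (((X ^ 2 + 4 * X + 1) * pyreneP (m + 1) - X ^ 2 * pyreneP m)).eval 1 = _
      simp only [eval_sub, eval_mul, eval_add, eval_pow, eval_one, eval_X, eval_ofNat]
      ring
    constructor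
    · linarith [ih.1, ih.2]
    · rw [h2]; linarith [ih.1, ih.2]

lemma pyreneP_deriv (n : ℕ) :
    (Polynomial.derivative (pyreneP n)).eval 1 = n * (pyreneP n).eval 1 := by
  have key : ∀ m : ℕ,
      (Polynomial.derivative (pyreneP m)).eval 1 = m * (pyreneP m).eval 1 ∧
      (Polynomial.derivative (pyreneP (m + 1))).eval 1 = (m + 1) * (pyreneP (m + 1)).eval 1 := by
    intro m
    induction m with
    | zero =>
      constructor
      · simp [pyreneP]
      · show (Polynomial.derivative (X ^ 2 + 4 * X + 1 : Polynomial ℝ)).eval 1 = _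
        simp [pyreneP]; norm_num
    | succ k ih =>
      refine ⟨by push_cast; exact ih.2, ?_⟩
      have e2 : pyreneP (k + 2) = (X ^ 2 + 4 * X + 1) * pyreneP (k + 1) - X ^ 2 * pyreneP k := rfl
      have a2 : (pyreneP (k + 2)).eval 1
          = 6 * (pyreneP (k + 1)).eval 1 - (pyreneP k).eval 1 := by
        rw [e2]
        simp only [eval_sub, eval_mul, eval_add, eval_pow, eval_one, eval_X, eval_ofNat]
        ring
      have d2 : (Polynomial.derivative (pyreneP (k + 2))).eval 1
          = 6 * (Polynomial.derivative (pyreneP (k + 1))).eval 1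
            + 6 * (pyreneP (k + 1)).eval 1
            - (Polynomial.derivative (pyreneP k)).eval 1 - 2 * (pyreneP k).eval 1 := by
        rw [e2]
        simp only [derivative_sub, derivative_mul, derivative_add, derivative_X_pow,
          derivative_one, derivative_X, eval_sub, eval_mul, eval_add, eval_pow, eval_one,
          eval_X, eval_ofNat, eval_smul, eval_natCast, derivative_ofNat, eval_zero,
          Polynomial.derivative_mul, smul_eq_mul, eval_C]
        push_cast
        norm_num
        ring
      rw [d2, a2, ih.1, ih.2]
      push_cast
      ring
  exact (key n).1

lemma pyreneP_sum_coeff (n : ℕ) :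
    (∑ k ∈ Finset.range (2 * n + 1), (pyreneP n).coeff k) = (pyreneP n).eval 1 := by
  rw [Polynomial.eval_eq_sum_range' (Nat.lt_succ_of_le (pyreneP_natDegree_le n))]
  simp

lemma pyreneP_sum_k_coeff (n : ℕ) :
    (∑ k ∈ Finset.range (2 * n + 1), (k : ℝ) * (pyreneP n).coeff k)
      = (Polynomial.derivative (pyreneP n)).eval 1 := by
  have hd : (Polynomial.derivative (pyreneP n)).natDegree < 2 * n + 1 := by
    have h1 := Polynomial.natDegree_derivative_le (pyreneP n)
    have h2 := pyreneP_natDegree_le n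
    omega
  rw [Polynomial.eval_eq_sum_range' hd]
  simp only [one_pow, mul_one, Polynomial.coeff_derivative]
  have htop : (pyreneP n).coeff (2 * n + 1) = 0 :=
    Polynomial.coeff_eq_zero_of_natDegree_lt (by have := pyreneP_natDegree_le n; omega)
  have step : (∑ k ∈ Finset.range (2 * n + 2), (k : ℝ) * (pyreneP n).coeff k)
      = ∑ i ∈ Finset.range (2 * n + 1), (pyreneP n).coeff (i + 1) * ((i : ℝ) + 1) := by
    rw [Finset.sum_range_succ']
    push_cast
    rw [show 2 * n + 1 = 1 + n * 2 by ring] at *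
    simp only [zero_mul, add_zero, Nat.cast_zero]
    exact Finset.sum_congr rfl fun x _ => by push_cast; ring
  have split : (∑ k ∈ Finset.range (2 * n + 2), (k : ℝ) * (pyreneP n).coeff k)
      = (∑ k ∈ Finset.range (2 * n + 1), (k : ℝ) * (pyreneP n).coeff k)
        + (2 * n + 1 : ℝ) * (pyreneP n).coeff (2 * n + 1) := by
    rw [Finset.sum_range_succ]; push_cast; ring
  rw [htop] at split
  simp at split
  rw [← split, step]

theorem pyreneP_mean (n : ℕ) :
    (Polynomial.derivative (pyreneP n)).eval 1 = n * (pyreneP n).eval 1 ∧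
    (∑ k ∈ Finset.range (2 * n + 1), (k : ℝ) * (pyreneP n).coeff k) /
        (∑ k ∈ Finset.range (2 * n + 1), (pyreneP n).coeff k) = n := by
  refine ⟨pyreneP_deriv n, ?_⟩
  rw [pyreneP_sum_coeff, pyreneP_sum_k_coeff, pyreneP_deriv]
  have hpos := (pyreneP_eval_one_pos n).1
  field_simp
end

section
/- Let $(f_n(x))_{n\ge 0}$ be a sequence of real polynomials, each with all coefficients positive, such that $\deg f_0=0$ and $\deg f_{n-1}\le\deg f_n\le\deg f_{n-1}+1$ for all $n\ge 1$. Suppose there exist real polynomials $a(x)$ and $b(x)$ with $b(x)\le 0$ for all real $x\le 0$, such that $f_n(x)=a(x)f_{n-1}(x)+b(x)f_{n-2}(x)$ for all $n\ge 2$. Then every $f_n(x)$ has only real zeros, i.e., every complex zero of $f_n$ is real. -/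
open Polynomial Multiset

namespace RZ

/-- count of elements of a real multiset satisfying a predicate -/
noncomputable def cnt (p : ℝ → Prop) (s : Multiset ℝ) : ℕ :=
  @Multiset.countP ℝ p (fun a => Classical.propDecidable (p a)) s

lemma cnt_zero (p : ℝ → Prop) : cnt p 0 = 0 := rfl

lemma cnt_cons_pos {p : ℝ → Prop} {a : ℝ} (s : Multiset ℝ) (h : p a) :
    cnt p (a ::ₘ s) = cnt p s + 1 := by
  unfold cnt
  exact @Multiset.countP_cons_of_pos ℝ p (fun a => Classical.propDecidable (p a)) a s h

lemma cnt_cons_neg {p : ℝ → Prop} {a : ℝ} (s : Multiset ℝ) (h : ¬ p a) :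
    cnt p (a ::ₘ s) = cnt p s := by
  unfold cnt
  exact @Multiset.countP_cons_of_neg ℝ p (fun a => Classical.propDecidable (p a)) a s h

lemma cnt_add (p : ℝ → Prop) (s t : Multiset ℝ) :
    cnt p (s + t) = cnt p s + cnt p t := by
  unfold cnt
  exact @Multiset.countP_add ℝ p (fun a => Classical.propDecidable (p a)) s t

lemma cnt_le_card (p : ℝ → Prop) (s : Multiset ℝ) : cnt p s ≤ Multiset.card s := by
  unfold cnt
  exact @Multiset.countP_le_card ℝ p (fun a => Classical.propDecidable (p a)) s

lemma cnt_congr {p q : ℝ → Prop} (s : Multiset ℝ) (h : ∀ a ∈ s, p a ↔ q a) :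
    cnt p s = cnt q s := by
  induction s using Multiset.induction_on with
  | empty => rfl
  | cons a s ih =>
      have ih2 := ih (fun x hx => h x (Multiset.mem_cons_of_mem hx))
      have ha := h a (Multiset.mem_cons_self a s)
      by_cases hp : p a
      · rw [cnt_cons_pos s hp, cnt_cons_pos s (ha.1 hp), ih2]
      · rw [cnt_cons_neg s hp, cnt_cons_neg s (fun hq => hp (ha.2 hq)), ih2]

lemma cnt_split (p q : ℝ → Prop) (s : Multiset ℝ) :
    cnt p s = cnt (fun a => p a ∧ q a) s + cnt (fun a => p a ∧ ¬ q a) s := by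
  induction s using Multiset.induction_on with
  | empty => rfl
  | cons a s ih =>
      by_cases hp : p a <;> by_cases hq : q a
      · rw [cnt_cons_pos s hp, cnt_cons_pos s ⟨hp, hq⟩,
          cnt_cons_neg s (fun h => h.2 hq)]; omega
      · rw [cnt_cons_pos s hp, cnt_cons_neg s (fun h => hq h.2),
          cnt_cons_pos s ⟨hp, hq⟩]; omega
      · rw [cnt_cons_neg s hp, cnt_cons_neg s (fun h => hp h.1),
          cnt_cons_neg s (fun h => hp h.1)]; omega
      · rw [cnt_cons_neg s hp, cnt_cons_neg s (fun h => hp h.1),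
          cnt_cons_neg s (fun h => hp h.1)]; omega

lemma cnt_add_not (p : ℝ → Prop) (s : Multiset ℝ) :
    cnt p s + cnt (fun a => ¬ p a) s = Multiset.card s := by
  induction s using Multiset.induction_on with
  | empty => rfl
  | cons a s ih =>
      rw [Multiset.card_cons]
      by_cases hp : p a
      · rw [cnt_cons_pos s hp, cnt_cons_neg s (fun h => h hp)]; omega
      · rw [cnt_cons_neg s hp, cnt_cons_pos s hp]; omega

lemma cnt_mono {p q : ℝ → Prop} (s : Multiset ℝ) (h : ∀ a ∈ s, p a → q a) :
    cnt p s ≤ cnt q s := by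
  induction s using Multiset.induction_on with
  | empty => exact le_rfl
  | cons a s ih =>
      have h2 := ih (fun x hx => h x (Multiset.mem_cons_of_mem hx))
      by_cases hp : p a
      · rw [cnt_cons_pos s hp, cnt_cons_pos s (h a (Multiset.mem_cons_self a s) hp)]; omega
      · rw [cnt_cons_neg s hp]
        by_cases hq : q a
        · rw [cnt_cons_pos s hq]; omega
        · rw [cnt_cons_neg s hq]; omega

lemma cnt_eq_count (x : ℝ) (s : Multiset ℝ) : cnt (fun a => a = x) s = s.count x := by
  induction s using Multiset.induction_on with
  | empty => rfl
  | cons a s ih =>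
      rw [Multiset.count_cons]
      by_cases hp : a = x
      · rw [cnt_cons_pos (p := fun a => a = x) s hp, ih, if_pos hp.symm]
      · rw [cnt_cons_neg (p := fun a => a = x) s hp, ih, if_neg (fun h => hp h.symm)]; omega

lemma cnt_pos_iff {p : ℝ → Prop} {s : Multiset ℝ} : 0 < cnt p s ↔ ∃ a ∈ s, p a := by
  unfold cnt
  exact @Multiset.countP_pos ℝ p (fun a => Classical.propDecidable (p a)) s

/-- number of roots of `p` strictly greater than `x`, with multiplicity -/
noncomputable def Rc (p : Polynomial ℝ) (x : ℝ) : ℕ := cnt (fun r => x < r) p.roots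
/-- number of roots of `p` strictly less than `x`, with multiplicity -/
noncomputable def Lc (p : Polynomial ℝ) (x : ℝ) : ℕ := cnt (fun r => r < x) p.roots

def Pos (p : Polynomial ℝ) : Prop := ∀ x : ℝ, 0 ≤ x → 0 < p.eval x
def RR (p : Polynomial ℝ) : Prop := Multiset.card p.roots = p.natDegree
def Itl (p q : Polynomial ℝ) : Prop := ∀ x : ℝ, Rc p x ≤ Rc q x ∧ Rc q x ≤ Rc p x + 1

lemma Pos.ne_zero {p : Polynomial ℝ} (hp : Pos p) : p ≠ 0 := by
  intro h; have := hp 0 le_rfl; rw [h] at this; simp at this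

lemma Pos.root_neg {p : Polynomial ℝ} (hp : Pos p) {r : ℝ} (hr : r ∈ p.roots) : r < 0 := by
  by_contra h
  have h2 := hp r (not_lt.1 h)
  have := (mem_roots hp.ne_zero).1 hr
  rw [IsRoot.def] at this
  simp [this] at h2

lemma Rc_le_card (p : Polynomial ℝ) (x : ℝ) : Rc p x ≤ Multiset.card p.roots :=
  cnt_le_card _ _

lemma Rc_mono (p : Polynomial ℝ) {x y : ℝ} (h : x ≤ y) : Rc p y ≤ Rc p x :=
  cnt_mono _ (fun a _ ha => lt_of_le_of_lt h ha)

lemma Lc_mono (p : Polynomial ℝ) {x y : ℝ} (h : x ≤ y) : Lc p x ≤ Lc p y :=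
  cnt_mono _ (fun a _ ha => lt_of_lt_of_le ha h)

lemma Rc_split (p : Polynomial ℝ) {u v : ℝ} (h : u ≤ v) :
    Rc p u = cnt (fun r => u < r ∧ r ≤ v) p.roots + Rc p v := by
  unfold Rc
  rw [cnt_split (fun r => u < r) (fun r => r ≤ v) p.roots]
  congr 1
  apply cnt_congr
  intro r _
  constructor
  · rintro ⟨_, h2⟩; exact not_le.1 h2
  · intro h1; exact ⟨lt_of_le_of_lt h h1, not_le.2 h1⟩

lemma Lc_split (p : Polynomial ℝ) {u v : ℝ} (h : u ≤ v) :
    Lc p v = cnt (fun r => u ≤ r ∧ r < v) p.roots + Lc p u := by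
  unfold Lc
  rw [cnt_split (fun r => r < v) (fun r => u ≤ r) p.roots]
  congr 1
  · apply cnt_congr
    intro r _
    exact ⟨fun h1 => ⟨h1.2, h1.1⟩, fun h1 => ⟨h1.2, h1.1⟩⟩
  · apply cnt_congr
    intro r _
    constructor
    · rintro ⟨_, h2⟩; exact not_le.1 h2
    · intro h1; exact ⟨lt_of_lt_of_le h1 h, not_le.2 h1⟩

/-- decomposition: card roots = Lc + count + Rc -/
lemma card_eq_Lc_add_count_add_Rc (p : Polynomial ℝ) (x : ℝ) :
    Multiset.card p.roots = Lc p x + p.roots.count x + Rc p x := by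
  have h0 := cnt_add_not (fun r => x < r) p.roots
  have h2 : cnt (fun a => ¬ x < a) p.roots =
      cnt (fun a => a < x) p.roots + cnt (fun a => a = x) p.roots := by
    rw [cnt_split (fun a => ¬ x < a) (fun r => r < x) p.roots]
    congr 1
    · apply cnt_congr; intro r _
      exact ⟨fun h => h.2, fun h => ⟨not_lt.2 h.le, h⟩⟩
    · apply cnt_congr; intro r _
      constructor
      · rintro ⟨hh1, hh2⟩; exact le_antisymm (not_lt.1 hh1) (not_lt.1 hh2)
      · intro h; simp [h]
  have h3 := cnt_eq_count x p.roots
  unfold Lc Rc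
  omega

end RZ

namespace RZ

/-- classical filter -/
noncomputable def flt (p : ℝ → Prop) (s : Multiset ℝ) : Multiset ℝ :=
  @Multiset.filter ℝ p (fun a => Classical.propDecidable (p a)) s

lemma flt_zero (p : ℝ → Prop) : flt p 0 = 0 := rfl

lemma flt_cons_pos {p : ℝ → Prop} {a : ℝ} (s : Multiset ℝ) (h : p a) :
    flt p (a ::ₘ s) = a ::ₘ flt p s := by
  unfold flt
  exact @Multiset.filter_cons_of_pos ℝ p (fun a => Classical.propDecidable (p a)) a s h

lemma flt_cons_neg {p : ℝ → Prop} {a : ℝ} (s : Multiset ℝ) (h : ¬ p a) :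
    flt p (a ::ₘ s) = flt p s := by
  unfold flt
  exact @Multiset.filter_cons_of_neg ℝ p (fun a => Classical.propDecidable (p a)) a s h

lemma flt_add_not (p : ℝ → Prop) (s : Multiset ℝ) :
    s = flt p s + flt (fun a => ¬ p a) s := by
  induction s using Multiset.induction_on with
  | empty => rfl
  | cons a s ih =>
      by_cases hp : p a
      · rw [flt_cons_pos s hp, flt_cons_neg (p := fun a => ¬ p a) s (fun h => h hp),
          Multiset.cons_add, ← ih]
      · rw [flt_cons_neg s hp, flt_cons_pos (p := fun a => ¬ p a) s hp,
          Multiset.add_cons]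
        rw [← ih]

lemma mem_flt {p : ℝ → Prop} {a : ℝ} {s : Multiset ℝ} (h : a ∈ flt p s) : a ∈ s ∧ p a := by
  unfold flt at h
  exact ⟨@Multiset.mem_of_mem_filter ℝ p (fun a => Classical.propDecidable (p a)) a s h,
    @Multiset.of_mem_filter ℝ p (fun a => Classical.propDecidable (p a)) a s h⟩

lemma card_flt (p : ℝ → Prop) (s : Multiset ℝ) : Multiset.card (flt p s) = cnt p s := by
  induction s using Multiset.induction_on with
  | empty => rfl
  | cons a s ih =>
      by_cases hp : p a
      · rw [flt_cons_pos s hp, cnt_cons_pos s hp, Multiset.card_cons, ih]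
      · rw [flt_cons_neg s hp, cnt_cons_neg s hp, ih]

end RZ

namespace RZ

lemma poly_ivt {p : Polynomial ℝ} {u v : ℝ} (huv : u ≤ v) (h1 : p.eval u < 0)
    (h2 : 0 < p.eval v) : ∃ z, u ≤ z ∧ z ≤ v ∧ p.eval z = 0 := by
  have hc : ContinuousOn (fun x => p.eval x) (Set.Icc u v) :=
    (Polynomial.continuous p).continuousOn
  have h3 := intermediate_value_Icc huv hc
  have h0 : (0:ℝ) ∈ Set.Icc (p.eval u) (p.eval v) := ⟨h1.le, h2.le⟩
  obtain ⟨z, hz, hz0⟩ := h3 h0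
  exact ⟨z, hz.1, hz.2, hz0⟩

lemma no_root_sign_const {q : Polynomial ℝ} (hq : ∀ y : ℝ, q.eval y ≠ 0) (x y : ℝ) :
    0 < q.eval x * q.eval y := by
  rcases lt_trichotomy (q.eval x) 0 with hx|hx|hx
  · rcases lt_trichotomy (q.eval y) 0 with hy|hy|hy
    · exact mul_pos_of_neg_of_neg hx hy
    · exact absurd hy (hq y)
    · exfalso
      rcases le_total x y with hxy|hxy
      · obtain ⟨z, _, _, hz⟩ := poly_ivt hxy hx hy
        exact hq z hz
      · obtain ⟨z, _, _, hz⟩ := poly_ivt (p := -q) hxy (by simpa using hy) (by simpa using hx)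
        exact hq z (by simpa using hz)
  · exact absurd hx (hq x)
  · rcases lt_trichotomy (q.eval y) 0 with hy|hy|hy
    · exfalso
      rcases le_total x y with hxy|hxy
      · obtain ⟨z, _, _, hz⟩ := poly_ivt (p := -q) hxy (by simpa using hx) (by simpa using hy)
        exact hq z (by simpa using hz)
      · obtain ⟨z, _, _, hz⟩ := poly_ivt hxy hy hx
        exact hq z hz
    · exact absurd hy (hq y)
    · exact mul_pos hx hy

/-- factorization with everywhere-positive quotient -/
lemma exists_pos_quotient {p : Polynomial ℝ} (hp : Pos p) :
    ∃ q : Polynomial ℝ, p = (p.roots.map (fun r => X - C r)).prod * q ∧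
      (∀ y : ℝ, 0 < q.eval y) := by
  obtain ⟨q, hq, _, hroots⟩ := p.exists_prod_multiset_X_sub_C_mul
  have hq0 : q ≠ 0 := by
    intro h
    rw [h, mul_zero] at hq
    exact hp.ne_zero hq.symm
  have hnr : ∀ y : ℝ, q.eval y ≠ 0 := by
    intro y hy
    have : y ∈ q.roots := (mem_roots hq0).2 hy
    rw [hroots] at this
    simp at this
  refine ⟨q, hq.symm, fun y => ?_⟩
  -- q is positive at 0
  have hprod0 : 0 < ((p.roots.map (fun r => X - C r)).prod).eval 0 := by
    rw [Polynomial.eval_multiset_prod]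
    apply Multiset.prod_pos
    intro z hz
    rw [Multiset.map_map] at hz
    obtain ⟨r, hr, hrz⟩ := Multiset.mem_map.1 hz
    have : z = -r := by
      rw [← hrz]; simp
    rw [this]
    simpa using hp.root_neg hr
  have hq00 : 0 < q.eval 0 := by
    have hpz := hp 0 le_rfl
    rw [← hq, Polynomial.eval_mul] at hpz
    by_contra hcon
    push_neg at hcon
    nlinarith
  have := no_root_sign_const hnr y 0
  nlinarith

lemma prod_sign_neg_part {x : ℝ} (s : Multiset ℝ) (h : ∀ r ∈ s, x < r) :
    0 < (-1:ℝ)^(Multiset.card s) * ((s.map (fun r => X - C r)).prod).eval x := by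
  induction s using Multiset.induction_on with
  | empty => simp
  | cons a s ih =>
      have ih2 := ih (fun r hr => h r (Multiset.mem_cons_of_mem hr))
      have ha : x - a < 0 := by
        have := h a (Multiset.mem_cons_self a s)
        linarith
      rw [Multiset.map_cons, Multiset.prod_cons, Multiset.card_cons, Polynomial.eval_mul]
      have hxa : ((X : Polynomial ℝ) - C a).eval x = x - a := by simp
      rw [hxa, pow_succ]
      nlinarith

lemma prod_sign_pos_part {x : ℝ} (s : Multiset ℝ) (h : ∀ r ∈ s, r < x) :
    0 < ((s.map (fun r => X - C r)).prod).eval x := by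
  rw [Polynomial.eval_multiset_prod]
  apply Multiset.prod_pos
  intro z hz
  rw [Multiset.map_map] at hz
  obtain ⟨r, hr, hrz⟩ := Multiset.mem_map.1 hz
  have hzr : z = x - r := by rw [← hrz]; simp
  rw [hzr]
  have := h r hr
  linarith

/-- THE SIGN LEMMA: for `Pos` polynomials, the sign at a non-root `x`
is `(-1) ^ (number of roots above x)` -/
lemma sign_eval {p : Polynomial ℝ} (hp : Pos p) {x : ℝ} (hx : p.eval x ≠ 0) :
    0 < (-1:ℝ)^(Rc p x) * p.eval x := by
  obtain ⟨q, hq, hqpos⟩ := exists_pos_quotient hp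
  have hsplit := flt_add_not (fun r => x < r) p.roots
  have hprod : ((p.roots.map (fun r => X - C r)).prod).eval x =
      (((flt (fun r => x < r) p.roots).map (fun r => X - C r)).prod).eval x *
      (((flt (fun r => ¬ x < r) p.roots).map (fun r => X - C r)).prod).eval x := by
    rw [← Polynomial.eval_mul, ← Multiset.prod_add, ← Multiset.map_add, ← hsplit]
  have hneg := prod_sign_neg_part (x := x) (flt (fun r => x < r) p.roots)
    (fun r hr => (mem_flt hr).2)
  have hpos : 0 < (((flt (fun r => ¬ x < r) p.roots).map (fun r => X - C r)).prod).eval x := by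
    apply prod_sign_pos_part
    intro r hr
    obtain ⟨hmem, hnlt⟩ := mem_flt hr
    have hne : r ≠ x := by
      intro h
      apply hx
      have := (mem_roots hp.ne_zero).1 hmem
      rw [IsRoot.def] at this
      rw [← h]; exact this
    rcases lt_trichotomy r x with h'|h'|h'
    · exact h'
    · exact absurd h' hne
    · exact absurd h' hnlt
  rw [card_flt] at hneg
  have hRc : Rc p x = cnt (fun r => x < r) p.roots := rfl
  have heval : p.eval x =
      (((flt (fun r => x < r) p.roots).map (fun r => X - C r)).prod).eval x *
      (((flt (fun r => ¬ x < r) p.roots).map (fun r => X - C r)).prod).eval x *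
      q.eval x := by
    conv_lhs => rw [hq]
    rw [Polynomial.eval_mul, hprod]
  rw [heval, hRc]
  have hqx := hqpos x
  nlinarith [mul_pos (mul_pos hneg hpos) hqx]

end RZ

namespace RZ

lemma sign_parity {a b : ℕ} {x : ℝ} (h1 : 0 < (-1:ℝ)^a * x) (h2 : 0 < (-1:ℝ)^b * x) :
    2 ∣ (a + b) := by
  rcases Nat.even_or_odd a with ha|ha <;> rcases Nat.even_or_odd b with hb|hb
  · exact (ha.add hb).two_dvd
  · exfalso
    rw [ha.neg_one_pow] at h1
    rw [hb.neg_one_pow] at h2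
    nlinarith
  · exfalso
    rw [ha.neg_one_pow] at h1
    rw [hb.neg_one_pow] at h2
    nlinarith
  · exact (ha.add_odd hb).two_dvd

lemma exists_clean_above (B : Multiset ℝ) {s z : ℝ} (hsz : s < z) :
    ∃ u, s < u ∧ u < z ∧ ∀ r ∈ B, ¬ (s < r ∧ r ≤ u) := by
  classical
  set T : Finset ℝ := insert z (B.toFinset.filter (fun r => s < r)) with hT
  have hne : T.Nonempty := ⟨z, Finset.mem_insert_self _ _⟩
  set m := T.min' hne with hm
  have hms : s < m := by
    have : ∀ y ∈ T, s < y := by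
      intro y hy
      rcases Finset.mem_insert.1 hy with h|h
      · rw [h]; exact hsz
      · exact (Finset.mem_filter.1 h).2
    exact this m (T.min'_mem hne)
  have hmz : m ≤ z := T.min'_le z (Finset.mem_insert_self _ _)
  refine ⟨(s + m)/2, by linarith, by linarith, ?_⟩
  rintro r hr ⟨hsr, hru⟩
  have hrT : r ∈ T := Finset.mem_insert_of_mem
    (Finset.mem_filter.2 ⟨Multiset.mem_toFinset.2 hr, hsr⟩)
  have := T.min'_le r hrT
  have : m ≤ r := this
  linarith

lemma exists_clean_below (B : Multiset ℝ) (s : ℝ) :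
    ∃ u, u < s ∧ ∀ r ∈ B, ¬ (u ≤ r ∧ r < s) := by
  classical
  set T : Finset ℝ := insert (s - 1) (B.toFinset.filter (fun r => r < s)) with hT
  have hne : T.Nonempty := ⟨s - 1, Finset.mem_insert_self _ _⟩
  set m := T.max' hne with hm
  have hms : m < s := by
    have : ∀ y ∈ T, y < s := by
      intro y hy
      rcases Finset.mem_insert.1 hy with h|h
      · rw [h]; linarith
      · exact (Finset.mem_filter.1 h).2
    exact this m (T.max'_mem hne)
  refine ⟨(m + s)/2, by linarith, ?_⟩
  rintro r hr ⟨hur, hrs⟩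
  have hrT : r ∈ T := Finset.mem_insert_of_mem
    (Finset.mem_filter.2 ⟨Multiset.mem_toFinset.2 hr, hrs⟩)
  have : r ≤ m := T.le_max' r hrT
  linarith

lemma exists_neg_far (F : Polynomial ℝ) (hlc : 0 < F.leadingCoeff) (w : ℝ) :
    ∃ u, u < w ∧ 0 < (-1:ℝ)^(F.natDegree) * F.eval u := by
  by_cases hD : F.natDegree = 0
  · obtain hC := Polynomial.eq_C_of_natDegree_eq_zero hD
    refine ⟨w - 1, by linarith, ?_⟩
    rw [hD, pow_zero, one_mul, hC, Polynomial.eval_C]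
    have : F.coeff 0 = F.leadingCoeff := by
      rw [Polynomial.leadingCoeff, hD]
    rw [this]
    exact hlc
  · set G : Polynomial ℝ := F.comp (-X) with hG
    have hcompdeg : G.natDegree = F.natDegree := by
      rw [hG, Polynomial.natDegree_comp]
      simp
    have hlcG : G.leadingCoeff = F.leadingCoeff * (-1:ℝ)^(F.natDegree) := by
      rw [hG, Polynomial.leadingCoeff_comp (by simp)]
      congr 1
      simp [Polynomial.leadingCoeff_neg]
    have hdegG : 0 < G.degree := by
      rw [← Polynomial.natDegree_pos_iff_degree_pos, hcompdeg]
      exact Nat.pos_of_ne_zero hD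
    have heval : ∀ y : ℝ, G.eval y = F.eval (-y) := by
      intro y
      rw [hG, Polynomial.eval_comp]
      simp
    rcases Nat.even_or_odd F.natDegree with hE|hO
    · have hlcG' : 0 ≤ G.leadingCoeff := by
        rw [hlcG, hE.neg_one_pow]; linarith
      have ht := Polynomial.tendsto_atTop_of_leadingCoeff_nonneg G hdegG hlcG'
      have h1 : ∀ᶠ y in Filter.atTop, (1:ℝ) ≤ G.eval y := Filter.tendsto_atTop.1 ht 1
      have h2 : ∀ᶠ y in Filter.atTop, -w < y := Filter.eventually_gt_atTop (-w)
      obtain ⟨y, hy1, hy2⟩ := (h1.and h2).exists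
      refine ⟨-y, by linarith, ?_⟩
      rw [hE.neg_one_pow, one_mul]
      have h3 := heval y
      linarith
    · have hlcG' : G.leadingCoeff ≤ 0 := by
        rw [hlcG, hO.neg_one_pow]; linarith
      have ht := Polynomial.tendsto_atBot_of_leadingCoeff_nonpos G hdegG hlcG'
      have h1 : ∀ᶠ y in Filter.atTop, G.eval y ≤ (-1:ℝ) := Filter.tendsto_atBot.1 ht (-1)
      have h2 : ∀ᶠ y in Filter.atTop, -w < y := Filter.eventually_gt_atTop (-w)
      obtain ⟨y, hy1, hy2⟩ := (h1.and h2).exists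
      refine ⟨-y, by linarith, ?_⟩
      rw [hO.neg_one_pow]
      have h3 := heval y
      nlinarith

end RZ

namespace RZ

lemma cnt_eq_zero_of {p : ℝ → Prop} {s : Multiset ℝ} (h : ∀ a ∈ s, ¬ p a) : cnt p s = 0 := by
  by_contra hc
  obtain ⟨a, ha, hpa⟩ := cnt_pos_iff.1 (Nat.pos_of_ne_zero hc)
  exact h a ha hpa

lemma cnt_window_eq_count {p : Polynomial ℝ} {u v s : ℝ} (hus : u < s) (hsv : s ≤ v)
    (hno : ∀ r ∈ p.roots, u < r → r ≤ v → r = s) :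
    cnt (fun r => u < r ∧ r ≤ v) p.roots = p.roots.count s := by
  rw [← cnt_eq_count]
  apply cnt_congr
  intro r hr
  constructor
  · rintro ⟨h1, h2⟩; exact hno r hr h1 h2
  · intro h; rw [h]; exact ⟨hus, hsv⟩

lemma count_le_window {p : Polynomial ℝ} {u v s : ℝ} (hus : u < s) (hsv : s ≤ v) :
    p.roots.count s ≤ cnt (fun r => u < r ∧ r ≤ v) p.roots := by
  rw [← cnt_eq_count]
  apply cnt_mono
  intro r _ hr
  rw [hr]
  exact ⟨hus, hsv⟩

lemma Rc_eq_of_no_roots {p : Polynomial ℝ} {u v : ℝ} (h : u ≤ v)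
    (hno : ∀ r ∈ p.roots, ¬ (u < r ∧ r ≤ v)) : Rc p u = Rc p v := by
  rw [Rc_split p h, cnt_eq_zero_of hno]
  omega

lemma eval_ne_zero_of_not_mem_roots {p : Polynomial ℝ} (hp : p ≠ 0) {x : ℝ}
    (h : x ∉ p.roots) : p.eval x ≠ 0 := fun hc => h ((mem_roots hp).2 hc)

/-- The main lower-bound induction for the coprime case. -/
lemma LB (f g F a b : Polynomial ℝ) (hPf : Pos f) (hPg : Pos g) (hPF : Pos F)
    (hI : Itl f g) (hcop : ∀ s : ℝ, ¬(f.eval s = 0 ∧ g.eval s = 0))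
    (hb : ∀ x : ℝ, x ≤ 0 → b.eval x ≤ 0) (hF : F = a*g + b*f) :
    ∀ k : ℕ, ∀ u : ℝ, F.eval u ≠ 0 → Rc g u = k → k ≤ Rc F u := by
  classical
  intro k
  induction k using Nat.strong_induction_on with
  | _ k IH =>
    intro u hFu hk
    rcases Nat.eq_zero_or_pos k with hk0|hkpos
    · omega
    -- there is a g-root above u; take the smallest one s
    have hex : ∃ r ∈ g.roots, u < r := by
      have hpos' : 0 < Rc g u := by omega
      exact cnt_pos_iff.1 hpos'
    set T : Finset ℝ := g.roots.toFinset.filter (fun r => u < r) with hT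
    have hTne : T.Nonempty := by
      obtain ⟨r, hr1, hr2⟩ := hex
      exact ⟨r, Finset.mem_filter.2 ⟨Multiset.mem_toFinset.2 hr1, hr2⟩⟩
    set s := T.min' hTne with hs
    have hsT := T.min'_mem hTne
    have hsroot : s ∈ g.roots := Multiset.mem_toFinset.1 (Finset.mem_filter.1 hsT).1
    have hus : u < s := (Finset.mem_filter.1 hsT).2
    have hmin : ∀ r ∈ g.roots, u < r → s ≤ r := by
      intro r hr hur
      exact T.min'_le r (Finset.mem_filter.2 ⟨Multiset.mem_toFinset.2 hr, hur⟩)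
    have hs0 : s < 0 := hPg.root_neg hsroot
    have hgs : g.eval s = 0 := by
      have := (mem_roots hPg.ne_zero).1 hsroot
      rwa [IsRoot.def] at this
    -- clean point u' just above s
    obtain ⟨u', hsu', hu'0, hclean⟩ := exists_clean_above (F.roots + g.roots) hs0
    have hcleanF : ∀ r ∈ F.roots, ¬ (s < r ∧ r ≤ u') := by
      intro r hr
      exact hclean r (Multiset.mem_add.2 (Or.inl hr))
    have hcleanG : ∀ r ∈ g.roots, ¬ (s < r ∧ r ≤ u') := by
      intro r hr
      exact hclean r (Multiset.mem_add.2 (Or.inr hr))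
    have hFu' : F.eval u' ≠ 0 := by
      apply eval_ne_zero_of_not_mem_roots hPF.ne_zero
      intro hmem
      exact hcleanF u' hmem ⟨hsu', le_rfl⟩
    -- count structure for g
    have hμ : 0 < g.roots.count s := Multiset.count_pos.2 hsroot
    have hgsplit : Rc g u = g.roots.count s + Rc g s := by
      rw [Rc_split g hus.le, cnt_window_eq_count hus le_rfl
        (fun r hr h1 h2 => le_antisymm h2 (hmin r hr h1))]
    have hgss : Rc g s = Rc g u' := Rc_eq_of_no_roots hsu'.le hcleanG
    have hFss : Rc F s = Rc F u' := Rc_eq_of_no_roots hsu'.le hcleanF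
    -- clean point w just below s, for the multiplicity/pin arguments
    obtain ⟨w, hws, hcleanw⟩ := exists_clean_below (f.roots + g.roots) s
    have hcleanwf : ∀ r ∈ f.roots, ¬ (w ≤ r ∧ r < s) := by
      intro r hr
      exact hcleanw r (Multiset.mem_add.2 (Or.inl hr))
    have hcleanwg : ∀ r ∈ g.roots, ¬ (w ≤ r ∧ r < s) := by
      intro r hr
      exact hcleanw r (Multiset.mem_add.2 (Or.inr hr))
    have hfw : Rc f w = f.roots.count s + Rc f s := by
      rw [Rc_split f hws.le, cnt_window_eq_count hws le_rfl
        (fun r hr h1 h2 => by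
          rcases lt_trichotomy r s with h'|h'|h'
          · exact absurd ⟨h1.le, h'⟩ (hcleanwf r hr)
          · exact h'
          · exact absurd h2 (not_le.2 h'))]
    have hgw : Rc g w = g.roots.count s + Rc g s := by
      rw [Rc_split g hws.le, cnt_window_eq_count hws le_rfl
        (fun r hr h1 h2 => by
          rcases lt_trichotomy r s with h'|h'|h'
          · exact absurd ⟨h1.le, h'⟩ (hcleanwg r hr)
          · exact h'
          · exact absurd h2 (not_le.2 h'))]
    -- simplicity: count s g.roots = 1
    have hIw := hI w
    have hIs := hI s
    have hsimple : g.roots.count s = 1 := by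
      by_contra hcon
      have h2 : 2 ≤ g.roots.count s := by omega
      have hf1 : 1 ≤ f.roots.count s := by omega
      have hfs : f.eval s = 0 := by
        have hmem : s ∈ f.roots := Multiset.count_pos.1 (by omega)
        have := (mem_roots hPf.ne_zero).1 hmem
        rwa [IsRoot.def] at this
      exact hcop s ⟨hfs, hgs⟩
    -- k decomposition
    have hk' : Rc g u' = k - 1 := by omega
    have hIH := IH (k - 1) (by omega) u' hFu' hk'
    -- case on the sign of b at s
    have hbs := hb s hs0.le
    rcases lt_or_eq_of_le hbs with hblt|hbeq
    · -- b(s) < 0 : the sign-change argument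
      have hfs : f.eval s ≠ 0 := by
        intro hc
        exact hcop s ⟨hc, hgs⟩
      have hcf : f.roots.count s = 0 := by
        by_contra hc
        have hmem : s ∈ f.roots := Multiset.count_pos.1 (Nat.pos_of_ne_zero hc)
        have := (mem_roots hPf.ne_zero).1 hmem
        rw [IsRoot.def] at this
        exact hfs this
      -- PIN: Rc f s = Rc g s
      have hpin : Rc f s = Rc g s := by
        have h1 : Rc f s ≤ Rc g s := hIs.1
        have h2 : Rc g w ≤ Rc f w + 1 := hIw.2
        omega
      -- F(s) = b(s) * f(s)
      have hFs : F.eval s = b.eval s * f.eval s := by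
        rw [hF]
        simp [hgs]
      have hFsne : F.eval s ≠ 0 := by
        rw [hFs]
        exact mul_ne_zero (ne_of_lt hblt) hfs
      have hsf := sign_eval hPf hfs
      have hsF := sign_eval hPF hFsne
      -- sign of F at s is (-1)^(Rc g s + 1)
      have hsgn : 0 < (-1:ℝ)^(Rc g s + 1) * F.eval s := by
        rw [hFs, hpin.symm, pow_succ]
        nlinarith
      have hpar := sign_parity hsF hsgn
      -- Rc F s ≥ k
      have : k ≤ Rc F s := by omega
      calc k ≤ Rc F s := this
        _ ≤ Rc F u := Rc_mono F hus.le
    · -- b(s) = 0 : s is a root of F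
      have hFs : F.eval s = 0 := by
        rw [hF]
        simp [hgs, hbeq]
      have hcount : 1 ≤ F.roots.count s := by
        apply Multiset.count_pos.2
        exact (mem_roots hPF.ne_zero).2 hFs
      have hFsplit : F.roots.count s + Rc F s ≤ Rc F u := by
        rw [Rc_split F hus.le]
        have := count_le_window (p := F) hus (le_refl s)
        omega
      omega

end RZ

namespace RZ

lemma cnt_window'_eq_count {p : Polynomial ℝ} {u v s : ℝ} (hus : u ≤ s) (hsv : s < v)
    (hno : ∀ r ∈ p.roots, u ≤ r → r < v → r = s) :
    cnt (fun r => u ≤ r ∧ r < v) p.roots = p.roots.count s := by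
  rw [← cnt_eq_count]
  apply cnt_congr
  intro r hr
  constructor
  · rintro ⟨h1, h2⟩; exact hno r hr h1 h2
  · intro h; rw [h]; exact ⟨hus, hsv⟩

lemma count_le_window' {p : Polynomial ℝ} {u v s : ℝ} (hus : u ≤ s) (hsv : s < v) :
    p.roots.count s ≤ cnt (fun r => u ≤ r ∧ r < v) p.roots := by
  rw [← cnt_eq_count]
  apply cnt_mono
  intro r _ hr
  rw [hr]
  exact ⟨hus, hsv⟩

lemma Lc_eq_of_no_roots {p : Polynomial ℝ} {u v : ℝ} (h : u ≤ v)
    (hno : ∀ r ∈ p.roots, ¬ (u ≤ r ∧ r < v)) : Lc p v = Lc p u := by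
  rw [Lc_split p h, cnt_eq_zero_of hno]
  omega

/-- at any root of `g`, the multiplicity is 1 (coprime interlacing case) -/
lemma root_simple (f g : Polynomial ℝ) (hPf : Pos f) (hPg : Pos g) (hI : Itl f g)
    (hcop : ∀ s : ℝ, ¬(f.eval s = 0 ∧ g.eval s = 0)) {s : ℝ} (hsroot : s ∈ g.roots) :
    g.roots.count s = 1 := by
  have hgs : g.eval s = 0 := by
    have := (mem_roots hPg.ne_zero).1 hsroot
    rwa [IsRoot.def] at this
  obtain ⟨w, hws, hcleanw⟩ := exists_clean_below (f.roots + g.roots) s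
  have hfw : Rc f w = f.roots.count s + Rc f s := by
    rw [Rc_split f hws.le, cnt_window_eq_count hws le_rfl
      (fun r hr h1 h2 => by
        rcases lt_trichotomy r s with h'|h'|h'
        · exact absurd ⟨h1.le, h'⟩ (hcleanw r (Multiset.mem_add.2 (Or.inl hr)))
        · exact h'
        · exact absurd h2 (not_le.2 h'))]
  have hgw : Rc g w = g.roots.count s + Rc g s := by
    rw [Rc_split g hws.le, cnt_window_eq_count hws le_rfl
      (fun r hr h1 h2 => by
        rcases lt_trichotomy r s with h'|h'|h'
        · exact absurd ⟨h1.le, h'⟩ (hcleanw r (Multiset.mem_add.2 (Or.inr hr)))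
        · exact h'
        · exact absurd h2 (not_le.2 h'))]
  have hμ : 0 < g.roots.count s := Multiset.count_pos.2 hsroot
  have hIw := hI w
  have hIs := hI s
  by_contra hcon
  have hf1 : 1 ≤ f.roots.count s := by omega
  have hfs : f.eval s = 0 := by
    have hmem : s ∈ f.roots := Multiset.count_pos.1 (by omega)
    have := (mem_roots hPf.ne_zero).1 hmem
    rwa [IsRoot.def] at this
  exact hcop s ⟨hfs, hgs⟩

/-- PIN: at a root of `g` where `f` does not vanish, `Rc f s = Rc g s`. -/
lemma pin_at_root (f g : Polynomial ℝ) (hPf : Pos f) (hPg : Pos g) (hI : Itl f g)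
    (hcop : ∀ s : ℝ, ¬(f.eval s = 0 ∧ g.eval s = 0)) {s : ℝ} (hsroot : s ∈ g.roots)
    (hfs : f.eval s ≠ 0) : Rc f s = Rc g s := by
  obtain ⟨w, hws, hcleanw⟩ := exists_clean_below (f.roots + g.roots) s
  have hcf : f.roots.count s = 0 := by
    by_contra hc
    have hmem : s ∈ f.roots := Multiset.count_pos.1 (Nat.pos_of_ne_zero hc)
    have := (mem_roots hPf.ne_zero).1 hmem
    rw [IsRoot.def] at this
    exact hfs this
  have hfw : Rc f w = f.roots.count s + Rc f s := by
    rw [Rc_split f hws.le, cnt_window_eq_count hws le_rfl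
      (fun r hr h1 h2 => by
        rcases lt_trichotomy r s with h'|h'|h'
        · exact absurd ⟨h1.le, h'⟩ (hcleanw r (Multiset.mem_add.2 (Or.inl hr)))
        · exact h'
        · exact absurd h2 (not_le.2 h'))]
  have hgw : Rc g w = g.roots.count s + Rc g s := by
    rw [Rc_split g hws.le, cnt_window_eq_count hws le_rfl
      (fun r hr h1 h2 => by
        rcases lt_trichotomy r s with h'|h'|h'
        · exact absurd ⟨h1.le, h'⟩ (hcleanw r (Multiset.mem_add.2 (Or.inr hr)))
        · exact h'
        · exact absurd h2 (not_le.2 h'))]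
  have hμ : 0 < g.roots.count s := Multiset.count_pos.2 hsroot
  have hIw := hI w
  have hIs := hI s
  omega

lemma cnt_all {p : ℝ → Prop} {s : Multiset ℝ} (h : ∀ a ∈ s, p a) :
    cnt p s = Multiset.card s := by
  have h1 := cnt_add_not p s
  have h2 : cnt (fun a => ¬ p a) s = 0 := cnt_eq_zero_of (fun a ha hn => hn (h a ha))
  omega

/-- G1: the root count of F is full. -/
lemma coprime_RR (f g F a b : Polynomial ℝ) (hPf : Pos f) (hPg : Pos g) (hPF : Pos F)
    (hI : Itl f g) (hcop : ∀ s : ℝ, ¬(f.eval s = 0 ∧ g.eval s = 0))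
    (hb : ∀ x : ℝ, x ≤ 0 → b.eval x ≤ 0) (hF : F = a*g + b*f)
    (hRg : RR g) (hlcF : 0 < F.leadingCoeff)
    (hdeg1 : g.natDegree ≤ F.natDegree) (hdeg2 : F.natDegree ≤ g.natDegree + 1) :
    RR F := by
  classical
  set B : Multiset ℝ := F.roots + g.roots with hB
  set T : Finset ℝ := insert (0:ℝ) B.toFinset with hT
  have hTne : T.Nonempty := ⟨0, Finset.mem_insert_self _ _⟩
  set m := T.min' hTne with hm
  obtain ⟨u, hum, hufast⟩ := exists_neg_far F hlcF m
  have hallroots : ∀ r ∈ B, u < r := by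
    intro r hr
    have : m ≤ r := T.min'_le r (Finset.mem_insert_of_mem (Multiset.mem_toFinset.2 hr))
    linarith
  have hFu : F.eval u ≠ 0 := by
    intro hc
    rw [hc, mul_zero] at hufast
    exact lt_irrefl 0 hufast
  have hRgu : Rc g u = Multiset.card g.roots :=
    cnt_all (fun r hr => hallroots r (Multiset.mem_add.2 (Or.inr hr)))
  have hRFu : Rc F u = Multiset.card F.roots :=
    cnt_all (fun r hr => hallroots r (Multiset.mem_add.2 (Or.inl hr)))
  have hLB := LB f g F a b hPf hPg hPF hI hcop hb hF (Rc g u) u hFu rfl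
  have hSL := sign_eval hPF hFu
  have hpar := sign_parity hSL hufast
  have hcard := Polynomial.card_roots' F
  unfold RR at hRg ⊢
  omega

end RZ

namespace RZ

/-- The mirror upper-bound induction: a lower bound on the number of roots of F
below u, given that F has a full set of roots. -/
lemma UB (f g F a b : Polynomial ℝ) (hPf : Pos f) (hPg : Pos g) (hPF : Pos F)
    (hI : Itl f g) (hcop : ∀ s : ℝ, ¬(f.eval s = 0 ∧ g.eval s = 0))
    (hb : ∀ x : ℝ, x ≤ 0 → b.eval x ≤ 0) (hF : F = a*g + b*f)
    (hRg : RR g) (hRF : RR F)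
    (hdeg2 : F.natDegree ≤ g.natDegree + 1) :
    ∀ l : ℕ, ∀ u : ℝ, F.eval u ≠ 0 → Lc g u = l →
      l + F.natDegree ≤ Lc F u + 1 + g.natDegree := by
  classical
  intro l
  induction l using Nat.strong_induction_on with
  | _ l IH =>
    intro u hFu hl
    rcases Nat.eq_zero_or_pos l with hl0|hlpos
    · omega
    -- there is a g-root below u; take the largest one s
    have hex : ∃ r ∈ g.roots, r < u := by
      have hpos' : 0 < Lc g u := by omega
      exact cnt_pos_iff.1 hpos'
    set T : Finset ℝ := g.roots.toFinset.filter (fun r => r < u) with hT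
    have hTne : T.Nonempty := by
      obtain ⟨r, hr1, hr2⟩ := hex
      exact ⟨r, Finset.mem_filter.2 ⟨Multiset.mem_toFinset.2 hr1, hr2⟩⟩
    set s := T.max' hTne with hs
    have hsT := T.max'_mem hTne
    have hsroot : s ∈ g.roots := Multiset.mem_toFinset.1 (Finset.mem_filter.1 hsT).1
    have hsu : s < u := (Finset.mem_filter.1 hsT).2
    have hmax : ∀ r ∈ g.roots, r < u → r ≤ s := by
      intro r hr hru
      exact T.le_max' r (Finset.mem_filter.2 ⟨Multiset.mem_toFinset.2 hr, hru⟩)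
    have hs0 : s < 0 := hPg.root_neg hsroot
    have hgs : g.eval s = 0 := by
      have := (mem_roots hPg.ne_zero).1 hsroot
      rwa [IsRoot.def] at this
    -- clean point u'' just below s
    obtain ⟨u'', hu''s, hclean⟩ := exists_clean_below (F.roots + g.roots) s
    have hcleanF : ∀ r ∈ F.roots, ¬ (u'' ≤ r ∧ r < s) := by
      intro r hr
      exact hclean r (Multiset.mem_add.2 (Or.inl hr))
    have hcleanG : ∀ r ∈ g.roots, ¬ (u'' ≤ r ∧ r < s) := by
      intro r hr
      exact hclean r (Multiset.mem_add.2 (Or.inr hr))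
    have hFu'' : F.eval u'' ≠ 0 := by
      apply eval_ne_zero_of_not_mem_roots hPF.ne_zero
      intro hmem
      exact hcleanF u'' hmem ⟨le_rfl, hu''s⟩
    -- simple root
    have hsimple := root_simple f g hPf hPg hI hcop hsroot
    -- count structure of g
    have hgsplit : Lc g u = g.roots.count s + Lc g s := by
      rw [Lc_split g hsu.le, cnt_window'_eq_count le_rfl hsu
        (fun r hr h1 h2 => le_antisymm (hmax r hr h2) h1)]
    have hgss : Lc g s = Lc g u'' := Lc_eq_of_no_roots hu''s.le hcleanG
    have hFss : Lc F s = Lc F u'' := Lc_eq_of_no_roots hu''s.le hcleanF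
    have hl' : Lc g u'' = l - 1 := by omega
    have hIH := IH (l - 1) (by omega) u'' hFu'' hl'
    -- full-count decompositions at s
    have hdecF := card_eq_Lc_add_count_add_Rc F s
    have hdecg := card_eq_Lc_add_count_add_Rc g s
    unfold RR at hRg hRF
    -- case on sign of b at s
    have hbs := hb s hs0.le
    rcases lt_or_eq_of_le hbs with hblt|hbeq
    · -- b(s) < 0, sign forces parity jump
      have hfs : f.eval s ≠ 0 := by
        intro hc
        exact hcop s ⟨hc, hgs⟩
      have hpin := pin_at_root f g hPf hPg hI hcop hsroot hfs
      have hFs : F.eval s = b.eval s * f.eval s := by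
        rw [hF]; simp [hgs]
      have hFsne : F.eval s ≠ 0 := by
        rw [hFs]; exact mul_ne_zero (ne_of_lt hblt) hfs
      have hcF : F.roots.count s = 0 := by
        by_contra hc
        have hmem : s ∈ F.roots := Multiset.count_pos.1 (Nat.pos_of_ne_zero hc)
        have := (mem_roots hPF.ne_zero).1 hmem
        rw [IsRoot.def] at this
        exact hFsne this
      have hsf := sign_eval hPf hfs
      have hsF := sign_eval hPF hFsne
      have hsgn : 0 < (-1:ℝ)^(Rc g s + 1) * F.eval s := by
        rw [hFs, hpin.symm, pow_succ]
        nlinarith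
      have hpar := sign_parity hsF hsgn
      have hmono : Lc F s ≤ Lc F u := Lc_mono F hsu.le
      omega
    · -- b(s) = 0 : s is a root of F
      have hFs : F.eval s = 0 := by
        rw [hF]; simp [hgs, hbeq]
      have hcount : 1 ≤ F.roots.count s := by
        apply Multiset.count_pos.2
        exact (mem_roots hPF.ne_zero).2 hFs
      have hFsplit : F.roots.count s + Lc F s ≤ Lc F u := by
        rw [Lc_split F hsu.le]
        have := count_le_window' (p := F) (le_refl s) hsu
        omega
      omega

end RZ

namespace RZ

/-- The full step lemma in the coprime case. -/
lemma coprime_step (f g F a b : Polynomial ℝ) (hPf : Pos f) (hPg : Pos g) (hPF : Pos F)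
    (hI : Itl f g) (hcop : ∀ s : ℝ, ¬(f.eval s = 0 ∧ g.eval s = 0))
    (hb : ∀ x : ℝ, x ≤ 0 → b.eval x ≤ 0) (hF : F = a*g + b*f)
    (hRg : RR g) (hlcF : 0 < F.leadingCoeff)
    (hdeg1 : g.natDegree ≤ F.natDegree) (hdeg2 : F.natDegree ≤ g.natDegree + 1) :
    RR F ∧ Itl g F := by
  have hRF := coprime_RR f g F a b hPf hPg hPF hI hcop hb hF hRg hlcF hdeg1 hdeg2
  refine ⟨hRF, ?_⟩
  intro x
  by_cases hx : 0 ≤ x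
  · have hg0 : Rc g x = 0 := cnt_eq_zero_of (fun r hr hlt => by
      have := hPg.root_neg hr; linarith)
    have hF0 : Rc F x = 0 := cnt_eq_zero_of (fun r hr hlt => by
      have := hPF.root_neg hr; linarith)
    constructor <;> omega
  · push_neg at hx
    obtain ⟨u', hxu', hu'0, hclean⟩ := exists_clean_above (F.roots + g.roots) hx
    have hcleanF : ∀ r ∈ F.roots, ¬ (x < r ∧ r ≤ u') := by
      intro r hr; exact hclean r (Multiset.mem_add.2 (Or.inl hr))
    have hcleanG : ∀ r ∈ g.roots, ¬ (x < r ∧ r ≤ u') := by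
      intro r hr; exact hclean r (Multiset.mem_add.2 (Or.inr hr))
    have hFu' : F.eval u' ≠ 0 := by
      apply eval_ne_zero_of_not_mem_roots hPF.ne_zero
      intro hmem
      exact hcleanF u' hmem ⟨hxu', le_rfl⟩
    have hgu' : g.eval u' ≠ 0 := by
      apply eval_ne_zero_of_not_mem_roots hPg.ne_zero
      intro hmem
      exact hcleanG u' hmem ⟨hxu', le_rfl⟩
    have hRFx : Rc F x = Rc F u' := Rc_eq_of_no_roots hxu'.le hcleanF
    have hRgx : Rc g x = Rc g u' := Rc_eq_of_no_roots hxu'.le hcleanG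
    have hLB := LB f g F a b hPf hPg hPF hI hcop hb hF (Rc g u') u' hFu' rfl
    have hUB := UB f g F a b hPf hPg hPF hI hcop hb hF hRg hRF hdeg2 (Lc g u') u' hFu' rfl
    have hdecF := card_eq_Lc_add_count_add_Rc F u'
    have hdecg := card_eq_Lc_add_count_add_Rc g u'
    have hcF : F.roots.count u' = 0 := by
      by_contra hc
      have hmem : u' ∈ F.roots := Multiset.count_pos.1 (Nat.pos_of_ne_zero hc)
      have := (mem_roots hPF.ne_zero).1 hmem
      rw [IsRoot.def] at this
      exact hFu' this
    have hcg : g.roots.count u' = 0 := by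
      by_contra hc
      have hmem : u' ∈ g.roots := Multiset.count_pos.1 (Nat.pos_of_ne_zero hc)
      have := (mem_roots hPg.ne_zero).1 hmem
      rw [IsRoot.def] at this
      exact hgu' this
    unfold RR at hRF hRg
    constructor <;> omega

end RZ

namespace RZ

/-- The full step lemma: given the interlacing invariant for (f, g) and the recurrence
F = a*g + b*f, we obtain it for (g, F). -/
lemma step (f g F a b : Polynomial ℝ) (hPf : Pos f) (hPg : Pos g) (hPF : Pos F)
    (hRf : RR f) (hRg : RR g) (hI : Itl f g)
    (hb : ∀ x : ℝ, x ≤ 0 → b.eval x ≤ 0) (hF : F = a*g + b*f)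
    (hlcF : 0 < F.leadingCoeff)
    (hdeg1 : g.natDegree ≤ F.natDegree) (hdeg2 : F.natDegree ≤ g.natDegree + 1) :
    RR F ∧ Itl g F := by
  classical
  set c : Multiset ℝ := f.roots ∩ g.roots with hc
  set h : Polynomial ℝ := (c.map (fun r => X - C r)).prod with hh
  have hmonic : h.Monic :=
    monic_multiset_prod_of_monic c (fun r => X - C r) (fun r _ => monic_X_sub_C r)
  have hh0 : h ≠ 0 := hmonic.ne_zero
  have hcf : c ≤ f.roots := Multiset.inter_le_left
  have hcg : c ≤ g.roots := Multiset.inter_le_right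
  have hdvdf : h ∣ f :=
    (Multiset.prod_dvd_prod_of_le (Multiset.map_le_map hcf)).trans f.prod_multiset_X_sub_C_dvd
  have hdvdg : h ∣ g :=
    (Multiset.prod_dvd_prod_of_le (Multiset.map_le_map hcg)).trans g.prod_multiset_X_sub_C_dvd
  have hdvdF : h ∣ F := by
    rw [hF]
    exact dvd_add (hdvdg.mul_left a) (hdvdf.mul_left b)
  obtain ⟨f₁, hf1⟩ := hdvdf
  obtain ⟨g₁, hg1⟩ := hdvdg
  obtain ⟨F₁, hF1⟩ := hdvdF
  have hf10 : f₁ ≠ 0 := by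
    intro hz; rw [hz, mul_zero] at hf1; exact hPf.ne_zero hf1
  have hg10 : g₁ ≠ 0 := by
    intro hz; rw [hz, mul_zero] at hg1; exact hPg.ne_zero hg1
  have hF10 : F₁ ≠ 0 := by
    intro hz; rw [hz, mul_zero] at hF1; exact hPF.ne_zero hF1
  have hrootsh : h.roots = c := roots_multiset_prod_X_sub_C c
  have hrootsf : f.roots = c + f₁.roots := by
    conv_lhs => rw [hf1]
    rw [roots_mul (by rw [← hf1]; exact hPf.ne_zero), hrootsh]
  have hrootsg : g.roots = c + g₁.roots := by
    conv_lhs => rw [hg1]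
    rw [roots_mul (by rw [← hg1]; exact hPg.ne_zero), hrootsh]
  have hrootsF : F.roots = c + F₁.roots := by
    conv_lhs => rw [hF1]
    rw [roots_mul (by rw [← hF1]; exact hPF.ne_zero), hrootsh]
  have hdegh : h.natDegree = Multiset.card c := by
    rw [hh]
    exact natDegree_multiset_prod_X_sub_C_eq_card c
  have hdegf : f.natDegree = Multiset.card c + f₁.natDegree := by
    conv_lhs => rw [hf1]
    rw [natDegree_mul hh0 hf10, hdegh]
  have hdegg : g.natDegree = Multiset.card c + g₁.natDegree := by
    conv_lhs => rw [hg1]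
    rw [natDegree_mul hh0 hg10, hdegh]
  have hdegF : F.natDegree = Multiset.card c + F₁.natDegree := by
    conv_lhs => rw [hF1]
    rw [natDegree_mul hh0 hF10, hdegh]
  -- positivity of h on nonnegative reals
  have hhpos : ∀ x : ℝ, 0 ≤ x → 0 < h.eval x := by
    intro x hx
    apply prod_sign_pos_part
    intro r hr
    have : r ∈ f.roots := Multiset.mem_of_le hcf hr
    have := hPf.root_neg this
    linarith
  have hPf₁ : Pos f₁ := by
    intro x hx
    have h1 := hPf x hx
    rw [hf1, Polynomial.eval_mul] at h1
    have h2 := hhpos x hx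
    by_contra hcon
    push_neg at hcon
    nlinarith
  have hPg₁ : Pos g₁ := by
    intro x hx
    have h1 := hPg x hx
    rw [hg1, Polynomial.eval_mul] at h1
    have h2 := hhpos x hx
    by_contra hcon
    push_neg at hcon
    nlinarith
  have hPF₁ : Pos F₁ := by
    intro x hx
    have h1 := hPF x hx
    rw [hF1, Polynomial.eval_mul] at h1
    have h2 := hhpos x hx
    by_contra hcon
    push_neg at hcon
    nlinarith
  -- RR for the reduced polynomials
  have hcardf := congrArg Multiset.card hrootsf
  have hcardg := congrArg Multiset.card hrootsg
  have hcardF := congrArg Multiset.card hrootsF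
  rw [Multiset.card_add] at hcardf hcardg hcardF
  have hRg₁ : RR g₁ := by
    unfold RR at hRg ⊢
    omega
  -- coprimality of the reduced pair
  have hcop₁ : ∀ s : ℝ, ¬(f₁.eval s = 0 ∧ g₁.eval s = 0) := by
    rintro s ⟨hfs, hgs⟩
    have hmf : s ∈ f₁.roots := (mem_roots hf10).2 hfs
    have hmg : s ∈ g₁.roots := (mem_roots hg10).2 hgs
    have h1 : 1 ≤ f₁.roots.count s := Multiset.count_pos.2 hmf
    have h2 : 1 ≤ g₁.roots.count s := Multiset.count_pos.2 hmg
    have h3 : c.count s = min (f.roots.count s) (g.roots.count s) := by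
      rw [hc]; exact Multiset.count_inter s _ _
    have h4 := congrArg (Multiset.count s) hrootsf
    have h5 := congrArg (Multiset.count s) hrootsg
    rw [Multiset.count_add] at h4 h5
    omega
  -- interlacing of the reduced pair
  have hRcf : ∀ x, Rc f x = cnt (fun r => x < r) c + Rc f₁ x := by
    intro x
    unfold Rc
    rw [hrootsf, cnt_add]
  have hRcg : ∀ x, Rc g x = cnt (fun r => x < r) c + Rc g₁ x := by
    intro x
    unfold Rc
    rw [hrootsg, cnt_add]
  have hRcF : ∀ x, Rc F x = cnt (fun r => x < r) c + Rc F₁ x := by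
    intro x
    unfold Rc
    rw [hrootsF, cnt_add]
  have hI₁ : Itl f₁ g₁ := by
    intro x
    have := hI x
    rw [hRcf x, hRcg x] at this
    omega
  -- the reduced recurrence
  have hF₁eq : F₁ = a * g₁ + b * f₁ := by
    apply mul_left_cancel₀ hh0
    rw [← hF1, hF]
    conv_lhs => rw [hf1, hg1]
    ring
  -- leading coefficient
  have hlcF₁ : 0 < F₁.leadingCoeff := by
    have : F.leadingCoeff = h.leadingCoeff * F₁.leadingCoeff := by
      rw [hF1, Polynomial.leadingCoeff_mul]
    rw [hmonic.leadingCoeff, one_mul] at this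
    rwa [this] at hlcF
  -- apply the coprime step
  obtain ⟨hRF₁, hIgF₁⟩ := coprime_step f₁ g₁ F₁ a b hPf₁ hPg₁ hPF₁ hI₁ hcop₁ hb hF₁eq
    hRg₁ hlcF₁ (by omega) (by omega)
  constructor
  · unfold RR at hRF₁ ⊢
    omega
  · intro x
    have := hIgF₁ x
    rw [hRcg x, hRcF x]
    omega

end RZ

namespace RZ

lemma pos_of_coeffs (p : Polynomial ℝ) (hp : ∀ i ≤ p.natDegree, 0 < p.coeff i) : Pos p := by
  intro x hx
  rw [Polynomial.eval_eq_sum_range]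
  apply Finset.sum_pos'
  · intro i _
    by_cases hi : i ≤ p.natDegree
    · exact mul_nonneg (hp i hi).le (pow_nonneg hx i)
    · rw [Polynomial.coeff_eq_zero_of_natDegree_lt (by omega)]
      simp
  · refine ⟨0, Finset.mem_range.2 (by omega), ?_⟩
    simpa using hp 0 (Nat.zero_le _)

lemma RR_of_deg_le_one (p : Polynomial ℝ) (hp0 : p ≠ 0) (hd : p.natDegree ≤ 1) : RR p := by
  rcases Nat.le_one_iff_eq_zero_or_eq_one.1 hd with h0|h1
  · unfold RR
    have := Polynomial.card_roots' p
    omega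
  · have hlc : p.coeff 1 ≠ 0 := by
      have : p.leadingCoeff ≠ 0 := Polynomial.leadingCoeff_ne_zero.2 hp0
      rwa [Polynomial.leadingCoeff, h1] at this
    have hrep := Polynomial.eq_X_add_C_of_natDegree_le_one hd
    have hroot : p.eval (-(p.coeff 0) / (p.coeff 1)) = 0 := by
      conv_lhs => rw [hrep]
      simp only [Polynomial.eval_add, Polynomial.eval_mul, Polynomial.eval_C, Polynomial.eval_X]
      field_simp
      rw [← hrep, mul_div_cancel_left₀ _ hlc]; ring
    have hmem : (-(p.coeff 0) / (p.coeff 1)) ∈ p.roots := (mem_roots hp0).2 hroot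
    have h1le : 1 ≤ Multiset.card p.roots := by
      rw [Nat.succ_le_iff, Multiset.card_pos_iff_exists_mem]
      exact ⟨_, hmem⟩
    have h2 := Polynomial.card_roots' p
    unfold RR
    omega

/-- the sequence invariant -/
theorem main_invariant (f : ℕ → Polynomial ℝ)
    (hpos : ∀ n, ∀ i ≤ (f n).natDegree, 0 < (f n).coeff i)
    (hdeg0 : (f 0).natDegree = 0)
    (hdeg : ∀ n, (f n).natDegree ≤ (f (n + 1)).natDegree ∧
      (f (n + 1)).natDegree ≤ (f n).natDegree + 1)
    (a b : Polynomial ℝ)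
    (hb : ∀ x : ℝ, x ≤ 0 → b.eval x ≤ 0)
    (hrec : ∀ n, f (n + 2) = a * f (n + 1) + b * f n) :
    ∀ n, RR (f n) ∧ RR (f (n+1)) ∧ Itl (f n) (f (n+1)) := by
  have hP : ∀ n, Pos (f n) := fun n => pos_of_coeffs (f n) (hpos n)
  have hlc : ∀ n, 0 < (f n).leadingCoeff := fun n => hpos n _ le_rfl
  intro n
  induction n with
  | zero =>
      show RR (f 0) ∧ RR (f 1) ∧ Itl (f 0) (f 1)
      have hR0 : RR (f 0) := by
        unfold RR
        have := Polynomial.card_roots' (f 0)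
        omega
      have hd1 : (f 1).natDegree ≤ 1 := by
        have h := (hdeg 0).2
        simp only [Nat.zero_add] at h
        omega
      have hR1 : RR (f 1) := RR_of_deg_le_one (f 1) (hP 1).ne_zero hd1
      refine ⟨hR0, hR1, ?_⟩
      intro x
      have hc0 : Multiset.card (f 0).roots = 0 := by
        have := Polynomial.card_roots' (f 0)
        omega
      have h1 : Rc (f 0) x = 0 := by
        have := Rc_le_card (f 0) x
        omega
      have h2 : Rc (f 1) x ≤ 1 := by
        have := Rc_le_card (f 1) x
        have := Polynomial.card_roots' (f 1)
        omega
      omega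
  | succ n ih =>
      obtain ⟨hRn, hRn1, hIn⟩ := ih
      obtain ⟨hRF, hIF⟩ := step (f n) (f (n+1)) (f (n+2)) a b (hP n) (hP (n+1)) (hP (n+2))
        hRn hRn1 hIn hb (hrec n) (hlc (n+2)) (hdeg (n+1)).1 (hdeg (n+1)).2
      exact ⟨hRn1, hRF, hIF⟩

/-- a real polynomial with full real root count has only real complex roots -/
lemma complex_roots_real {p : Polynomial ℝ} (hp0 : p ≠ 0) (hRR : RR p) {z : ℂ}
    (hz : Polynomial.aeval z p = 0) : ∃ r : ℝ, z = (r : ℂ) := by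
  have hsp : Polynomial.Splits p := Polynomial.splits_iff_card_roots.2 hRR
  have hrep := hsp.eq_prod_roots
  have heval : Polynomial.aeval z p =
      (algebraMap ℝ ℂ p.leadingCoeff) *
        ((p.roots.map (fun r => z - (algebraMap ℝ ℂ r))).prod) := by
    calc Polynomial.aeval z p
        = Polynomial.aeval z (C p.leadingCoeff) *
            Polynomial.aeval z ((p.roots.map (fun r => X - C r)).prod) := by
          rw [← map_mul, ← hrep]
      _ = (algebraMap ℝ ℂ p.leadingCoeff) *
            ((p.roots.map (fun r => X - C r)).map (Polynomial.aeval z)).prod := by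
          rw [Polynomial.aeval_C, map_multiset_prod]
      _ = (algebraMap ℝ ℂ p.leadingCoeff) *
            ((p.roots.map (fun r => z - (algebraMap ℝ ℂ r))).prod) := by
          congr 1
          rw [Multiset.map_map]
          apply congrArg
          apply Multiset.map_congr rfl
          intro r _
          simp
  rw [heval] at hz
  have hlc : (algebraMap ℝ ℂ p.leadingCoeff) ≠ 0 := by
    intro hc
    apply Polynomial.leadingCoeff_ne_zero.2 hp0
    exact (algebraMap ℝ ℂ).injective (by rw [_root_.map_zero (algebraMap ℝ ℂ)]; exact hc)
  have hprod : ((p.roots.map (fun r => z - (algebraMap ℝ ℂ r))).prod) = 0 := by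
    rcases mul_eq_zero.1 hz with h|h
    · exact absurd h hlc
    · exact h
  have h0m : (0:ℂ) ∈ p.roots.map (fun r => z - (algebraMap ℝ ℂ r)) :=
    Multiset.prod_eq_zero_iff.1 hprod
  obtain ⟨r, _, hr0⟩ := Multiset.mem_map.1 h0m
  refine ⟨r, ?_⟩
  have : z = algebraMap ℝ ℂ r := sub_eq_zero.1 hr0
  rw [this]
  rfl

end RZ

open RZ in
theorem real_zeros_of_recurrence (f : ℕ → Polynomial ℝ)
    (hpos : ∀ n, ∀ i ≤ (f n).natDegree, 0 < (f n).coeff i)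
    (hdeg0 : (f 0).natDegree = 0)
    (hdeg : ∀ n, (f n).natDegree ≤ (f (n + 1)).natDegree ∧
      (f (n + 1)).natDegree ≤ (f n).natDegree + 1)
    (a b : Polynomial ℝ)
    (hb : ∀ x : ℝ, x ≤ 0 → b.eval x ≤ 0)
    (hrec : ∀ n, f (n + 2) = a * f (n + 1) + b * f n) :
    ∀ n, ∀ z : ℂ, Polynomial.aeval z (f n) = 0 → ∃ r : ℝ, z = (r : ℂ) := by
  intro n z hz
  have hinv := main_invariant f hpos hdeg0 hdeg a b hb hrec n
  have hP : Pos (f n) := pos_of_coeffs (f n) (hpos n)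
  exact complex_roots_real hP.ne_zero hinv.1 hz
end

section
/- Let $P_n(x)$ be the sequence of real polynomials defined by $P_0(x)=1$, $P_1(x)=x^2+4x+1$, and $P_n(x)=(x^2+4x+1)P_{n-1}(x)-x^2P_{n-2}(x)$ for $n\ge 2$. Let $Z=\{x\in\mathbb{R} : P_n(x)=0\text{ for some }n\ge 1\}$. Then the closure of $Z$ in $\mathbb{R}$ equals the closed interval $\left[-3-2\sqrt{2},\,-3+2\sqrt{2}\right]$; in particular, the real zeros of the family $(P_n)_{n\ge 1}$ are dense in $\left[-3-2\sqrt{2},\,-3+2\sqrt{2}\right]$. -/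
open Polynomial

lemma pyreneP_eval (x : ℝ) (n : ℕ) :
    (pyreneP (n+2)).eval x
      = (x^2+4*x+1) * (pyreneP (n+1)).eval x - x^2 * (pyreneP n).eval x := by
  simp [pyreneP]

lemma pyreneP_eval0 (x : ℝ) : (pyreneP 0).eval x = 1 := by simp [pyreneP]

lemma pyreneP_eval1 (x : ℝ) : (pyreneP 1).eval x = x^2+4*x+1 := by simp [pyreneP]

lemma pyreneP_pos {x : ℝ} (h : 0 < x^2 + 6*x + 1) (n : ℕ) : 0 < (pyreneP n).eval x := by
  have ht : 0 < x^2 + 4*x + 1 := by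
    rcases le_or_gt x 0 with hx | hx
    · nlinarith
    · nlinarith
  have hsq : 4*x^2 ≤ (x^2+4*x+1)^2 := by nlinarith [sq_nonneg (x+1)]
  have key : ∀ n, 0 < (pyreneP n).eval x ∧
      (x^2+4*x+1)/2 * (pyreneP n).eval x ≤ (pyreneP (n+1)).eval x := by
    intro n
    induction n with
    | zero =>
        refine ⟨by simp [pyreneP_eval0], ?_⟩
        rw [pyreneP_eval0, pyreneP_eval1]; nlinarith
    | succ n ih =>
        obtain ⟨h1, h2⟩ := ih
        have h3 : 0 < (pyreneP (n+1)).eval x := lt_of_lt_of_le (by positivity) h2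
        refine ⟨h3, ?_⟩
        rw [pyreneP_eval]
        nlinarith [mul_le_mul_of_nonneg_left h2 (le_of_lt ht)]
  exact (key n).1

lemma pyreneP_trig (x θ : ℝ) (hc : -(2*x) * Real.cos θ = x^2+4*x+1) (n : ℕ) :
    Real.sin θ * (pyreneP n).eval x = (-x)^n * Real.sin (((n:ℝ)+1) * θ) := by
  induction n using Nat.twoStepInduction with
  | zero => simp [pyreneP]
  | one =>
      have h2 : (((1:ℕ):ℝ)+1) * θ = 2 * θ := by norm_num
      rw [h2, Real.sin_two_mul]
      have he : (pyreneP 1).eval x = x^2+4*x+1 := by simp [pyreneP]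
      rw [he, ← hc]; ring
  | more n ih1 ih2 =>
      have hs3 : Real.sin (((n:ℝ)+3) * θ)
          = 2 * Real.sin (((n:ℝ)+2)*θ) * Real.cos θ - Real.sin (((n:ℝ)+1) * θ) := by
        have e1 : ((n:ℝ)+3)*θ = ((n:ℝ)+2)*θ + θ := by ring
        have e2 : ((n:ℝ)+1)*θ = ((n:ℝ)+2)*θ - θ := by ring
        rw [e1, e2, Real.sin_add, Real.sin_sub]; ring
      have hev := pyreneP_eval x n
      push_cast at ih1 ih2 ⊢
      rw [hev]
      have e3 : ((n:ℝ)+2+1) * θ = ((n:ℝ)+3) * θ := by ring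
      rw [e3, hs3]
      have e4 : ((n:ℝ)+1+1) * θ = ((n:ℝ)+2) * θ := by ring
      rw [e4] at ih2
      linear_combination (x^2+4*x+1) * ih2 - x^2 * ih1
        + ((-x)^n * x * Real.sin (((n:ℝ)+2)*θ)) * hc

lemma pyreneP_mem_Z {x : ℝ} {k m : ℕ} (hk : 0 < k) (hkm : k < m)
    (hc : -(2*x) * Real.cos ((k:ℝ)*Real.pi/(m:ℝ)) = x^2+4*x+1) :
    ∃ n, 1 ≤ n ∧ (pyreneP n).eval x = 0 := by
  have hm : (0:ℝ) < (m:ℝ) := by exact_mod_cast (by omega : 0 < m)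
  refine ⟨m-1, by omega, ?_⟩
  set θ := (k:ℝ)*Real.pi/(m:ℝ) with hθ
  have htrig := pyreneP_trig x θ hc (m-1)
  have hcast : ((m-1:ℕ):ℝ) + 1 = (m:ℝ) := by
    have : 1 ≤ m := by omega
    push_cast [this]; ring
  rw [hcast] at htrig
  have hsin0 : Real.sin ((m:ℝ) * θ) = 0 := by
    have : (m:ℝ) * θ = (k:ℝ) * Real.pi := by
      rw [hθ]; field_simp
    rw [this, Real.sin_nat_mul_pi]
  have hθpos : 0 < θ := by
    rw [hθ]
    have : (0:ℝ) < (k:ℝ) := by exact_mod_cast hk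
    positivity
  have hθlt : θ < Real.pi := by
    rw [hθ, div_lt_iff₀ hm]
    have hk' : (k:ℝ) < (m:ℝ) := by exact_mod_cast hkm
    nlinarith [Real.pi_pos]
  have hsne : Real.sin θ ≠ 0 := ne_of_gt (Real.sin_pos_of_pos_of_lt_pi hθpos hθlt)
  rw [hsin0, mul_zero] at htrig
  exact (mul_eq_zero.mp htrig).resolve_left hsne

noncomputable def pyg (s c : ℝ) : ℝ := -(2+c) + s * Real.sqrt ((c+2)^2 - 1)

lemma pyg_quad {s c : ℝ} (hs : s^2 = 1) (hc1 : -1 ≤ c) :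
    (pyg s c)^2 + (4+2*c)*(pyg s c) + 1 = 0 := by
  have h0 : (0:ℝ) ≤ (c+2)^2 - 1 := by nlinarith
  have hr : Real.sqrt ((c+2)^2-1) ^ 2 = (c+2)^2 - 1 := Real.sq_sqrt h0
  simp only [pyg]
  linear_combination s^2 * hr + ((c+2)^2-1) * hs

lemma pyg_cont (s : ℝ) : Continuous (pyg s) := by
  unfold pyg; fun_prop

theorem pyreneP_zeros_dense :
    closure {x : ℝ | ∃ n : ℕ, 1 ≤ n ∧ (pyreneP n).eval x = 0} =
      Set.Icc (-3 - 2 * Real.sqrt 2) (-3 + 2 * Real.sqrt 2) := by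
  have h2 : Real.sqrt 2 ^ 2 = 2 := Real.sq_sqrt (by norm_num)
  have h2n : (0:ℝ) ≤ Real.sqrt 2 := Real.sqrt_nonneg 2
  have h21 : 1 ≤ Real.sqrt 2 := by nlinarith
  apply subset_antisymm
  · apply closure_minimal _ isClosed_Icc
    rintro x ⟨n, hn, hx⟩
    by_contra hxI
    simp only [Set.mem_Icc, not_and_or, not_le] at hxI
    have h6 : 0 < x^2+6*x+1 := by
      rcases hxI with h | h
      · nlinarith
      · nlinarith
    exact absurd hx (pyreneP_pos h6 n).ne'
  · intro y hy
    have hsqrt8 : Real.sqrt (((1:ℝ)+2)^2 - 1) = 2*Real.sqrt 2 := by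
      rw [show ((1:ℝ)+2)^2 - 1 = 2^2*2 by norm_num, Real.sqrt_mul (by norm_num),
        Real.sqrt_sq (by norm_num)]
    have hgm1 : ∀ s : ℝ, pyg s (-1) = -1 := by
      intro s; unfold pyg
      rw [show ((-1:ℝ)+2)^2 - 1 = 0 by norm_num, Real.sqrt_zero]; ring
    have hga : pyg (-1) 1 = -3 - 2*Real.sqrt 2 := by
      simp only [pyg, hsqrt8]; ring
    have hgb : pyg 1 1 = -3 + 2*Real.sqrt 2 := by
      simp only [pyg, hsqrt8]; ring
    obtain ⟨s, c, hs, hcI, hgy⟩ :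
        ∃ s c : ℝ, s^2 = 1 ∧ c ∈ Set.Icc (-1:ℝ) 1 ∧ pyg s c = y := by
      rcases le_total y (-1) with hy1 | hy1
      · have him := intermediate_value_Icc' (by norm_num : (-1:ℝ) ≤ 1)
          ((pyg_cont (-1)).continuousOn)
        have hy' : y ∈ Set.Icc (pyg (-1) 1) (pyg (-1) (-1)) := by
          rw [hga, hgm1]; exact ⟨hy.1, hy1⟩
        obtain ⟨c, hc, hcy⟩ := him hy'
        exact ⟨-1, c, by norm_num, hc, hcy⟩
      · have him := intermediate_value_Icc (by norm_num : (-1:ℝ) ≤ 1)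
          ((pyg_cont 1).continuousOn)
        have hy' : y ∈ Set.Icc (pyg 1 (-1)) (pyg 1 1) := by
          rw [hgb, hgm1]; exact ⟨hy1, hy.2⟩
        obtain ⟨c, hc, hcy⟩ := him hy'
        exact ⟨1, c, by norm_num, hc, hcy⟩
    rw [Metric.mem_closure_iff]
    intro ε hε
    set θ₀ := Real.arccos c with hθ₀def
    have hcos : Real.cos θ₀ = c := Real.cos_arccos hcI.1 hcI.2
    have hφ : Continuous (fun θ : ℝ => pyg s (Real.cos θ)) :=
      (pyg_cont s).comp Real.continuous_cos
    obtain ⟨δ, hδ, hδε⟩ := Metric.continuous_iff.mp hφ θ₀ ε hε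
    have hπ := Real.pi_pos
    have h0θ : 0 ≤ θ₀ := Real.arccos_nonneg c
    have hθπ : θ₀ ≤ Real.pi := Real.arccos_le_pi c
    have hlt : max 0 ((θ₀-δ)/Real.pi) < min 1 ((θ₀+δ)/Real.pi) := by
      rw [lt_min_iff, max_lt_iff, max_lt_iff]
      refine ⟨⟨by norm_num, by rw [div_lt_one hπ]; linarith⟩,
              ⟨div_pos (by linarith) hπ, by gcongr; linarith⟩⟩
    obtain ⟨q, hq1, hq2⟩ := exists_rat_btwn hlt
    have hq0 : (0:ℚ) < q := by
      have : (0:ℝ) < (q:ℝ) := lt_of_le_of_lt (le_max_left _ _) hq1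
      exact_mod_cast this
    have hql : q < 1 := by
      have : (q:ℝ) < 1 := lt_of_lt_of_le hq2 (min_le_left _ _)
      exact_mod_cast this
    set k := q.num.toNat with hkdef
    set m := q.den with hmdef
    have hnum : 0 < q.num := Rat.num_pos.mpr hq0
    have hmpos : 0 < m := q.pos
    have hkpos : 0 < k := by rw [hkdef]; omega
    have hkm : k < m := by
      have hlt1 := Rat.lt_one_iff_num_lt_denom.mpr hql
      rw [hkdef, hmdef]; omega
    have hkR : ((k:ℕ):ℝ) = ((q.num:ℤ):ℝ) := by
      have h' : (q.num.toNat : ℤ) = q.num := Int.toNat_of_nonneg hnum.le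
      rw [hkdef]; exact_mod_cast h'
    have hqr : (q:ℝ) = (k:ℝ)/(m:ℝ) := by
      rw [Rat.cast_def, hkR]
    have hθeq : (k:ℝ)*Real.pi/(m:ℝ) = (q:ℝ)*Real.pi := by
      rw [hqr]; ring
    have hθd : dist ((k:ℝ)*Real.pi/(m:ℝ)) θ₀ < δ := by
      rw [Real.dist_eq, hθeq, abs_lt]
      constructor
      · have h1 : (θ₀-δ)/Real.pi < (q:ℝ) := lt_of_le_of_lt (le_max_right _ _) hq1
        have h2' := (div_lt_iff₀ hπ).mp h1
        linarith
      · have h1 : (q:ℝ) < (θ₀+δ)/Real.pi := lt_of_lt_of_le hq2 (min_le_right _ _)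
        have h2' := (lt_div_iff₀ hπ).mp h1
        linarith
    set x := pyg s (Real.cos ((k:ℝ)*Real.pi/(m:ℝ))) with hxdef
    have hcx : -(2*x) * Real.cos ((k:ℝ)*Real.pi/(m:ℝ)) = x^2+4*x+1 := by
      have hq := pyg_quad hs (Real.neg_one_le_cos ((k:ℝ)*Real.pi/(m:ℝ)))
      rw [← hxdef] at hq
      linear_combination -hq
    obtain ⟨n, hn1, hn0⟩ := pyreneP_mem_Z hkpos hkm hcx
    refine ⟨x, ⟨n, hn1, hn0⟩, ?_⟩
    have hfin := hδε _ hθd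
    simp only [hcos, hgy] at hfin
    rw [← hxdef] at hfin
    rw [dist_comm]
    exact hfin
end
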